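/- arXiv:1203.4459 — 10 statements merged into one kernel-verified Lean document; each statement's English description precedes it below -/
import Mathlib

section
/- For partial isometries f : X ⇢ Y and g : Y ⇢ Z with dom g ⊇ img f, the approximate isometry associated to the composite partial isometry g∘f equals the composition of the associated approximate isometries: ψ_g ψ_f = ψ_{gf}. -/
open scoped ENNReal

/-- A Katětov function on a metric space, with values in `[0,∞]`. -/
def Katetov {X : Type*} [MetricSpace X] (ψ : X → ℝ≥0∞) : Prop :=
  ∀ x y : X, ψ x ≤ ENNReal.ofReal (dist x y) + ψ y ∧
    ENNReal.ofReal (dist x y) ≤ ψ x + ψ y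

/-- An approximate isometry `X ⇝ Y`: a bi-Katětov function `X × Y → [0,∞]`. -/
def BiKatetov {X Y : Type*} [MetricSpace X] [MetricSpace Y]
    (ψ : X × Y → ℝ≥0∞) : Prop :=
  (∀ y, Katetov fun x => ψ (x, y)) ∧ (∀ x, Katetov fun y => ψ (x, y))

/-- The composition `φψ(x,z) = inf_y (ψ(x,y) + φ(y,z))` of approximate
isometries `ψ : X ⇝ Y` and `φ : Y ⇝ Z`. -/
noncomputable def ApxComp {X Y Z : Type*} [MetricSpace X] [MetricSpace Y]
    [MetricSpace Z] (ψ : X × Y → ℝ≥0∞) (φ : Y × Z → ℝ≥0∞) :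
    X × Z → ℝ≥0∞ :=
  fun p => ⨅ y : Y, ψ (p.1, y) + φ (y, p.2)

/-- The pseudo-inverse `ψ*(y,x) = ψ(x,y)`. -/
def ApxInv {X Y : Type*} (ψ : X × Y → ℝ≥0∞) : Y × X → ℝ≥0∞ :=
  fun p => ψ (p.2, p.1)

/-- The approximate isometry associated to a partial isometry with domain `D`. -/
noncomputable def partialApx {X Y : Type*} [MetricSpace X] [MetricSpace Y]
    (D : Set X) (f : X → Y) : X × Y → ℝ≥0∞ :=
  fun p => ⨅ z ∈ D, ENNReal.ofReal (dist p.1 z) + ENNReal.ofReal (dist (f z) p.2)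

/-- For partial isometries `f : X ⇢ Y` and `g : Y ⇢ Z` with `dom g ⊇ img f`,
one has `ψ_g ψ_f = ψ_{g∘f}`. -/
theorem partialApx_comp {X Y Z : Type*} [MetricSpace X] [MetricSpace Y]
    [MetricSpace Z] (Df : Set X) (f : X → Y) (Dg : Set Y) (g : Y → Z)
    (hf : ∀ a ∈ Df, ∀ b ∈ Df, dist (f a) (f b) = dist a b)
    (hg : ∀ a ∈ Dg, ∀ b ∈ Dg, dist (g a) (g b) = dist a b)
    (himg : f '' Df ⊆ Dg) :
    ApxComp (partialApx Df f) (partialApx Dg g) = partialApx Df (g ∘ f) := by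
  funext p
  obtain ⟨x, z⟩ := p
  simp only [ApxComp, partialApx, Function.comp]
  apply le_antisymm
  · refine le_iInf₂ fun a ha => ?_
    refine le_trans (iInf_le _ (f a)) ?_
    have h1 : (⨅ c ∈ Df, ENNReal.ofReal (dist x c) + ENNReal.ofReal (dist (f c) (f a)))
        ≤ ENNReal.ofReal (dist x a) := by
      refine le_trans (biInf_le _ ha) ?_
      simp
    have h2 : (⨅ c ∈ Dg, ENNReal.ofReal (dist (f a) c) + ENNReal.ofReal (dist (g c) z))
        ≤ ENNReal.ofReal (dist (g (f a)) z) := by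
      refine le_trans (biInf_le _ (himg ⟨a, ha, rfl⟩)) ?_
      simp
    exact le_trans (add_le_add h1 h2) le_rfl
  · refine le_iInf fun y => ?_
    simp only [ENNReal.iInf_add, ENNReal.add_iInf]
    refine le_iInf₂ fun b hb => le_iInf₂ fun a ha => ?_
    refine le_trans (biInf_le _ ha) ?_
    have key : dist (g (f a)) z ≤ dist (f a) y + dist y b + dist (g b) z := by
      have h3 : dist (g (f a)) z ≤ dist (g (f a)) (g b) + dist (g b) z := dist_triangle _ _ _
      rw [hg _ (himg ⟨a, ha, rfl⟩) _ hb] at h3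
      have h4 : dist (f a) b ≤ dist (f a) y + dist y b := dist_triangle _ _ _
      linarith
    calc ENNReal.ofReal (dist x a) + ENNReal.ofReal (dist (g (f a)) z)
        ≤ ENNReal.ofReal (dist x a) +
          (ENNReal.ofReal (dist (f a) y) + (ENNReal.ofReal (dist y b) + ENNReal.ofReal (dist (g b) z))) := by
          gcongr
          calc ENNReal.ofReal (dist (g (f a)) z)
              ≤ ENNReal.ofReal (dist (f a) y + (dist y b + dist (g b) z)) :=
                ENNReal.ofReal_le_ofReal (by linarith)
            _ = _ := by
                rw [ENNReal.ofReal_add dist_nonneg (by positivity),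
                  ENNReal.ofReal_add dist_nonneg dist_nonneg]
      _ = ENNReal.ofReal (dist x a) + ENNReal.ofReal (dist (f a) y) +
          (ENNReal.ofReal (dist y b) + ENNReal.ofReal (dist (g b) z)) := by ring
end

section
/- The space Apx(X,Y) of approximate isometries from X to Y, equipped with the topology induced from the product topology on [0,∞]^{X×Y}, is compact. -/
open scoped ENNReal

theorem isClosed_setOf_katetov (X : Type*) [MetricSpace X] :
    IsClosed {ψ : X → ℝ≥0∞ | Katetov ψ} := by
  simp only [Katetov, Set.ofPred_forall, Set.ofPred_and]
  refine isClosed_iInter fun x => isClosed_iInter fun y => .inter ?_ ?_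
  all_goals exact isClosed_le (by fun_prop) (by fun_prop)

theorem isClosed_setOf_biKatetov (X Y : Type*) [MetricSpace X] [MetricSpace Y] :
    IsClosed {ψ : X × Y → ℝ≥0∞ | BiKatetov ψ} := by
  simp only [BiKatetov, Set.ofPred_and, Set.ofPred_forall]
  refine .inter (isClosed_iInter fun y => ?_) (isClosed_iInter fun x => ?_)
  · exact (isClosed_setOf_katetov X).preimage
      (by fun_prop : Continuous fun (ψ : X × Y → ℝ≥0∞) x => ψ (x, y))
  · exact (isClosed_setOf_katetov Y).preimage
      (by fun_prop : Continuous fun (ψ : X × Y → ℝ≥0∞) y => ψ (x, y))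

/-- The space `Apx(X,Y)` of approximate isometries, with the topology induced
from the product topology on `[0,∞]^{X×Y}`, is compact. -/
theorem isCompact_apx {X Y : Type*} [MetricSpace X] [MetricSpace Y] :
    IsCompact {ψ : X × Y → ℝ≥0∞ | BiKatetov ψ} :=
  (isClosed_setOf_biKatetov X Y).isCompact
end

section
/- The map sending a (global, surjective) isometry f : X → X to the approximate isometry ψ_f(x,y) = d(fx,y) is a topological embedding of the isometry group Iso(X) (with the topology of pointwise convergence) into Apx(X) with the product topology from [0,∞]^{X×X}. -/
open scoped ENNReal

/-- The map sending a surjective self-isometry `f` of `X` to the approximate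
isometry `(x,y) ↦ d(fx,y)` is a topological embedding of `Iso(X)` (with the
pointwise convergence topology) into `Apx(X)` with the product topology. -/
theorem iso_embedding_apx {X : Type*} [MetricSpace X] :
    letI : TopologicalSpace (X ≃ᵢ X) :=
      TopologicalSpace.induced (fun f : X ≃ᵢ X => (f : X → X)) Pi.topologicalSpace
    Topology.IsEmbedding (fun (f : X ≃ᵢ X) (p : X × X) =>
      ENNReal.ofReal (dist (f p.1) p.2)) := by
  letI tI : TopologicalSpace (X ≃ᵢ X) :=
    TopologicalSpace.induced (fun f : X ≃ᵢ X => (f : X → X)) Pi.topologicalSpace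
  set Φ : (X ≃ᵢ X) → (X × X → ℝ≥0∞) :=
    fun f p => ENNReal.ofReal (dist (f p.1) p.2) with hΦ
  have hinj : Function.Injective Φ := by
    intro f g h
    ext x
    have := congrFun h (x, g x)
    simp only [hΦ, dist_self, ENNReal.ofReal_zero, ENNReal.ofReal_eq_zero] at this
    exact dist_le_zero.mp this
  refine ⟨⟨le_antisymm ?_ ?_⟩, hinj⟩
  · -- tI ≤ induced Φ
    have hcomp : Φ = (fun (g : X → X) (p : X × X) => ENNReal.ofReal (dist (g p.1) p.2)) ∘
        (fun f : X ≃ᵢ X => (f : X → X)) := rfl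
    have hΨ : Continuous (fun (g : X → X) (p : X × X) => ENNReal.ofReal (dist (g p.1) p.2)) := by
      refine continuous_pi fun p => ?_
      exact ENNReal.continuous_ofReal.comp ((continuous_apply p.1).dist continuous_const)
    calc tI = TopologicalSpace.induced (fun f : X ≃ᵢ X => (f : X → X)) Pi.topologicalSpace := rfl
      _ ≤ TopologicalSpace.induced (fun f : X ≃ᵢ X => (f : X → X))
          (TopologicalSpace.induced
            (fun (g : X → X) (p : X × X) => ENNReal.ofReal (dist (g p.1) p.2))
            Pi.topologicalSpace) :=
        induced_mono (continuous_iff_le_induced.mp hΨ)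
      _ = TopologicalSpace.induced Φ Pi.topologicalSpace := by
        rw [induced_compose, ← hcomp]
  · -- induced Φ ≤ tI
    letI t2 : TopologicalSpace (X ≃ᵢ X) := TopologicalSpace.induced Φ Pi.topologicalSpace
    show t2 ≤ tI
    have : tI = ⨅ x : X, TopologicalSpace.induced (fun f : X ≃ᵢ X => f x) inferInstance := by
      show TopologicalSpace.induced _ Pi.topologicalSpace = _
      rw [Pi.topologicalSpace, induced_iInf]
      simp only [induced_compose]
      rfl
    rw [this]
    refine le_iInf fun x => ?_
    rw [← continuous_iff_le_induced]
    rw [continuous_iff_continuousAt]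
    intro f₀
    rw [ContinuousAt, Metric.tendsto_nhds]
    intro ε hε
    have h0 : Φ f₀ ∈ {ψ : X × X → ℝ≥0∞ | ψ (x, f₀ x) < ENNReal.ofReal ε} := by
      simp only [hΦ, Set.mem_setOf_eq, dist_self, ENNReal.ofReal_zero]
      exact ENNReal.ofReal_pos.mpr hε
    have hopen : IsOpen {ψ : X × X → ℝ≥0∞ | ψ (x, f₀ x) < ENNReal.ofReal ε} :=
      isOpen_Iio.preimage (continuous_apply (x, f₀ x))
    have hmem : Φ ⁻¹' {ψ : X × X → ℝ≥0∞ | ψ (x, f₀ x) < ENNReal.ofReal ε} ∈ Filter.comap Φ (nhds (Φ f₀)) := Filter.preimage_mem_comap (IsOpen.mem_nhds hopen h0)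
    rw [nhds_induced]
    filter_upwards [hmem] with f hf
    exact (ENNReal.ofReal_lt_ofReal_iff hε).mp hf
end

section
/- Composition of approximate isometries is upper semi-continuous with respect to limsup: for nets (ψ_α) in Apx(X,Y) and (φ_α) in Apx(Y,Z), one has (limsup φ_α)(limsup ψ_α) ≥ limsup (φ_α ψ_α) pointwise. -/
open scoped ENNReal

open Filter in
lemma my_limsup_add_le {ι : Type*} (l : Filter ι) [l.NeBot] (u v : ι → ℝ≥0∞) :
    limsup (fun i => u i + v i) l ≤ limsup u l + limsup v l := by
  set A := limsup u l; set B := limsup v l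
  rcases eq_or_ne A ⊤ with hA | hA
  · simp [hA]
  rcases eq_or_ne B ⊤ with hB | hB
  · simp [hB]
  refine ENNReal.le_of_forall_pos_le_add fun ε hε _ => ?_
  have hε2 : (0 : ℝ≥0∞) < ε / 2 := by
    simp [ENNReal.div_pos_iff, (by exact_mod_cast hε.ne' : (ε:ℝ≥0∞) ≠ 0)]
  have hu : ∀ᶠ i in l, u i < A + ε / 2 :=
    Filter.eventually_lt_of_limsup_lt (by exact ENNReal.lt_add_right hA hε2.ne')
  have hv : ∀ᶠ i in l, v i < B + ε / 2 :=
    Filter.eventually_lt_of_limsup_lt (by exact ENNReal.lt_add_right hB hε2.ne')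
  have : ∀ᶠ i in l, u i + v i ≤ A + B + ε := by
    filter_upwards [hu, hv] with i h1 h2
    calc u i + v i ≤ (A + ε/2) + (B + ε/2) := add_le_add h1.le h2.le
    _ = A + B + (ε/2 + ε/2) := by ring
    _ = A + B + ε := by rw [ENNReal.add_halves]
  exact Filter.limsup_le_of_le (by isBoundedDefault) this

/-- Composition of approximate isometries is upper semi-continuous with respect
to limsup: `(limsup φ_α)(limsup ψ_α) ≥ limsup (φ_α ψ_α)` pointwise. -/
theorem apxComp_limsup_le {X Y Z : Type*} [MetricSpace X] [MetricSpace Y]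
    [MetricSpace Z] (ι : Type*) (l : Filter ι) [l.NeBot]
    (ψ : ι → X × Y → ℝ≥0∞) (φ : ι → Y × Z → ℝ≥0∞)
    (hψ : ∀ i, BiKatetov (ψ i)) (hφ : ∀ i, BiKatetov (φ i)) :
    ∀ p : X × Z,
      Filter.limsup (fun i => ApxComp (ψ i) (φ i) p) l ≤
        ApxComp (fun q => Filter.limsup (fun i => ψ i q) l)
          (fun q => Filter.limsup (fun i => φ i q) l) p := by
  intro p
  refine le_iInf fun y => ?_
  calc Filter.limsup (fun i => ApxComp (ψ i) (φ i) p) l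
      ≤ Filter.limsup (fun i => ψ i (p.1, y) + φ i (y, p.2)) l := by
        refine Filter.limsup_le_limsup (Filter.Eventually.of_forall fun i => ?_)
        exact iInf_le (fun y => ψ i (p.1, y) + φ i (y, p.2)) y
    _ ≤ Filter.limsup (fun i => ψ i (p.1, y)) l +
          Filter.limsup (fun i => φ i (y, p.2)) l :=
        my_limsup_add_le l _ _
end

section
/- If ψ is an approximate isometry from X to Y and U is a neighbourhood of ψ in Apx(X,Y), then there exists φ ∈ U with ψ < φ, i.e., φ strictly coarsens ψ (ψ lies in the interior of {ρ ∈ Apx(X,Y) : ρ ≤ φ}). -/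
open scoped ENNReal

/-- The space of approximate isometries from `X` to `Y`, topologised as a
subspace of the product `[0,∞]^{X×Y}`. -/
def Apx (X Y : Type*) [MetricSpace X] [MetricSpace Y] :=
  {ψ : X × Y → ℝ≥0∞ // BiKatetov ψ}

instance (X Y : Type*) [MetricSpace X] [MetricSpace Y] :
    TopologicalSpace (Apx X Y) :=
  instTopologicalSpaceSubtype

/-!
A neighbourhood of `ψ` only constrains finitely many values `ψ q`, `q ∈ S`, and
only up to some `ε > 0`. The largest bi-Katětov function that is at most `ψ q + ε` at every
`q ∈ S` is `φ p = min_{q ∈ S} (d(p.1, q.1) + ψ q + ε + d(q.2, p.2))`; it dominates `ψ`, so it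
lies in the neighbourhood, and it dominates every `ρ` with `ρ q ≤ ψ q + ε` on `S`, which holds
for all `ρ` near `ψ` since `ε > 0`.
-/

open Set Filter Topology

theorem ENNReal.exists_Icc_add_subset_of_mem_nhds {a : ℝ≥0∞} {t : Set ℝ≥0∞} (ht : t ∈ 𝓝 a) :
    ∃ ε > 0, Icc a (a + ε) ⊆ t := by
  by_cases ha : a = ⊤
  · subst ha
    exact ⟨1, one_pos, by simpa using mem_of_mem_nhds ht⟩
  · obtain ⟨ε, hε, hsub⟩ := (ENNReal.hasBasis_nhds_of_ne_top ha).mem_iff.1 ht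
    exact ⟨ε, hε, (Icc_subset_Icc_left tsub_le_self).trans hsub⟩

theorem ENNReal.eventually_le_add (a : ℝ≥0∞) {ε : ℝ≥0∞} (hε : ε ≠ 0) :
    ∀ᶠ b in 𝓝 a, b ≤ a + ε := by
  by_cases ha : a = ⊤
  · simp [ha]
  · exact Iic_mem_nhds (ENNReal.lt_add_right ha hε)

theorem ENNReal.exists_finset_forall_mem_of_mem_nhds_pi {ι : Type*} {f : ι → ℝ≥0∞}
    {V : Set (ι → ℝ≥0∞)} (hV : V ∈ 𝓝 f) :
    ∃ S : Finset ι, ∃ ε > 0, ∀ g, (∀ i ∈ S, g i ∈ Icc (f i) (f i + ε)) → g ∈ V := by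
  rw [nhds_pi, mem_pi'] at hV
  obtain ⟨S, t, ht, htV⟩ := hV
  choose e he hsub using fun i => exists_Icc_add_subset_of_mem_nhds (ht i)
  refine ⟨S, S.inf e, (Finset.lt_inf_iff ENNReal.zero_lt_top).2 fun i _ => he i, fun g hg => ?_⟩
  refine htV fun i hi => hsub i ?_
  exact Icc_subset_Icc_right (add_le_add_right (Finset.inf_le hi) _) (hg i hi)

theorem Katetov.of_le {X : Type*} [MetricSpace X] {ψ φ : X → ℝ≥0∞} (hψ : Katetov ψ)
    (hle : ∀ x, ψ x ≤ φ x) (hφ : ∀ x y, φ x ≤ edist x y + φ y) : Katetov φ := by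
  intro x y
  rw [← edist_dist]
  exact ⟨hφ x y, by simpa only [edist_dist] using (hψ x y).2.trans (add_le_add (hle x) (hle y))⟩

section Coarsening

variable {X Y : Type*} [MetricSpace X] [MetricSpace Y]

theorem BiKatetov.le_edist_add_add {ρ : X × Y → ℝ≥0∞} (h : BiKatetov ρ) (p q : X × Y) :
    ρ p ≤ edist p.1 q.1 + ρ q + edist q.2 p.2 := by
  have h₁ := (h.1 p.2 p.1 q.1).1
  have h₂ := (h.2 q.1 p.2 q.2).1
  rw [← edist_dist] at h₁ h₂
  calc ρ p ≤ edist p.1 q.1 + ρ (q.1, p.2) := h₁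
    _ ≤ edist p.1 q.1 + (edist p.2 q.2 + ρ q) := by gcongr
    _ = edist p.1 q.1 + ρ q + edist q.2 p.2 := by rw [edist_comm p.2]; ring

/-- The largest function that is `1`-Lipschitz in each variable and bounded by `c` on `S`. -/
noncomputable def coarsening (S : Finset (X × Y)) (c : X × Y → ℝ≥0∞) : X × Y → ℝ≥0∞ :=
  fun p => ⨅ q ∈ S, edist p.1 q.1 + c q + edist q.2 p.2

variable {S : Finset (X × Y)} {c : X × Y → ℝ≥0∞}

theorem coarsening_le_of_mem {q : X × Y} (hq : q ∈ S) : coarsening S c q ≤ c q := by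
  calc coarsening S c q ≤ edist q.1 q.1 + c q + edist q.2 q.2 := iInf₂_le q hq
    _ = c q := by simp

theorem coarsening_le_edist_add_add (p p' : X × Y) :
    coarsening S c p ≤ edist p.1 p'.1 + coarsening S c p' + edist p'.2 p.2 := by
  simp only [coarsening, ENNReal.add_iInf, ENNReal.iInf_add]
  refine iInf₂_mono fun q _ => ?_
  calc edist p.1 q.1 + c q + edist q.2 p.2
      ≤ (edist p.1 p'.1 + edist p'.1 q.1) + c q + (edist q.2 p'.2 + edist p'.2 p.2) := by
        gcongr <;> exact edist_triangle _ _ _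
    _ = edist p.1 p'.1 + (edist p'.1 q.1 + c q + edist q.2 p'.2) + edist p'.2 p.2 := by ring

theorem BiKatetov.le_coarsening {ρ : X × Y → ℝ≥0∞} (hρ : BiKatetov ρ)
    (hc : ∀ q ∈ S, ρ q ≤ c q) (p : X × Y) : ρ p ≤ coarsening S c p :=
  le_iInf₂ fun q hq => (hρ.le_edist_add_add p q).trans (by gcongr; exact hc q hq)

theorem BiKatetov.coarsening {ψ : X × Y → ℝ≥0∞} (hψ : BiKatetov ψ)
    (hc : ∀ q ∈ S, ψ q ≤ c q) : BiKatetov (coarsening S c) := by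
  have hle := hψ.le_coarsening hc
  refine ⟨fun y => (hψ.1 y).of_le (fun x => hle (x, y)) fun x x' => ?_,
    fun x => (hψ.2 x).of_le (fun y => hle (x, y)) fun y y' => ?_⟩
  · simpa using coarsening_le_edist_add_add (S := S) (c := c) (x, y) (x', y)
  · simpa [add_comm, edist_comm] using coarsening_le_edist_add_add (S := S) (c := c) (x, y) (x, y')

end Coarsening

/-- If `U` is a neighbourhood of `ψ` in `Apx(X,Y)`, there is `φ ∈ U` strictly
coarsening `ψ`: `ψ` lies in the interior of `{ρ : ρ ≤ φ}`. -/
theorem exists_strict_coarsening {X Y : Type*} [MetricSpace X] [MetricSpace Y]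
    (ψ : Apx X Y) (U : Set (Apx X Y)) (hU : U ∈ nhds ψ) :
    ∃ φ ∈ U, ψ ∈ interior {ρ : Apx X Y | ∀ p, ρ.1 p ≤ φ.1 p} := by
  obtain ⟨V, hV, hVU⟩ := mem_nhds_induced Subtype.val ψ U |>.1 hU
  obtain ⟨S, ε, hε, hSV⟩ := ENNReal.exists_finset_forall_mem_of_mem_nhds_pi hV
  have hψc : ∀ q ∈ S, ψ.1 q ≤ ψ.1 q + ε := fun _ _ => le_self_add
  let φ : Apx X Y := ⟨coarsening S (ψ.1 · + ε), ψ.2.coarsening hψc⟩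
  refine ⟨φ, hVU (hSV _ fun q hq => ⟨ψ.2.le_coarsening hψc q, coarsening_le_of_mem hq⟩), ?_⟩
  have hnear : ∀ᶠ ρ : Apx X Y in 𝓝 ψ, ∀ q ∈ S, ρ.1 q ≤ ψ.1 q + ε :=
    (eventually_all_finset S).2 fun q _ =>
      ((continuous_apply q).comp continuous_subtype_val).continuousAt.eventually
        (ENNReal.eventually_le_add _ hε.ne')
  exact mem_interior_iff_mem_nhds.2 (hnear.mono fun ρ hρ => ρ.2.le_coarsening hρ)
end

section
/- For approximate isometries φ, ψ : X ⇝ Y, one has ψ < φ (φ strictly coarsens ψ) if and only if there exist finite sets X₀ ⊆ X, Y₀ ⊆ Y and ε > 0 such that φ ≥ ψ|_{X₀×Y₀} + ε, where ψ|_{X₀×Y₀} denotes the trivial extension to X ⇝ Y of the restriction of ψ to X₀ × Y₀. -/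
open scoped ENNReal

/-- The trivial extension to `X ⇝ Y` of the restriction of `ψ` to `X₀ × Y₀`. -/
noncomputable def trivExt {X Y : Type*} [MetricSpace X] [MetricSpace Y]
    (X₀ : Set X) (Y₀ : Set Y) (ψ : X × Y → ℝ≥0∞) : X × Y → ℝ≥0∞ :=
  fun p => ⨅ x₀ ∈ X₀, ⨅ y₀ ∈ Y₀,
    ENNReal.ofReal (dist p.1 x₀) + ψ (x₀, y₀) + ENNReal.ofReal (dist y₀ p.2)

/-!
A basic neighbourhood of `ψ` in `Apx(X,Y)` only asks that `ψ(p) ≤ ρ(p) ≤ ψ(p) + ε` at finitely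
many points `p`, with `X₀ × Y₀` the product of their projections. The approximate isometry
`ψ|_{X₀×Y₀} + ε` dominates `ψ` (bi-Katětov functions are ≤ their trivial extensions) and equals
`ψ + ε` on `X₀ × Y₀`, so it lies in that neighbourhood; if the neighbourhood lies below `φ`, this
gives `φ ≥ ψ|_{X₀×Y₀} + ε`. Conversely, every `ρ` with `ρ ≤ ψ + ε` on the finite set
`X₀ × Y₀` (an open condition) satisfies `ρ ≤ ρ|_{X₀×Y₀} ≤ ψ|_{X₀×Y₀} + ε ≤ φ`.
-/

open Filter Topology Set

section Katetov

variable {X Y : Type*} [MetricSpace X] [MetricSpace Y]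

theorem katetov_iff_edist {ψ : X → ℝ≥0∞} :
    Katetov ψ ↔ ∀ x y, ψ x ≤ edist x y + ψ y ∧ edist x y ≤ ψ x + ψ y := by
  simp only [Katetov, edist_dist]

theorem Katetov.le_edist_add {ψ : X → ℝ≥0∞} (h : Katetov ψ) (x y : X) :
    ψ x ≤ edist x y + ψ y :=
  (katetov_iff_edist.1 h x y).1

theorem Katetov.edist_le_add {ψ : X → ℝ≥0∞} (h : Katetov ψ) (x y : X) :
    edist x y ≤ ψ x + ψ y :=
  (katetov_iff_edist.1 h x y).2

theorem Katetov.add_const {ψ : X → ℝ≥0∞} (h : Katetov ψ) (c : ℝ≥0∞) :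
    Katetov fun x => ψ x + c := by
  refine katetov_iff_edist.2 fun x y => ⟨?_, ?_⟩
  · rw [← add_assoc]
    gcongr
    exact h.le_edist_add x y
  · grw [h.edist_le_add x y]
    gcongr <;> exact le_self_add

theorem BiKatetov.add_const {ψ : X × Y → ℝ≥0∞} (h : BiKatetov ψ) (c : ℝ≥0∞) :
    BiKatetov fun p => ψ p + c :=
  ⟨fun y => (h.1 y).add_const c, fun x => (h.2 x).add_const c⟩

theorem BiKatetov.inv {ψ : X × Y → ℝ≥0∞} (h : BiKatetov ψ) : BiKatetov (ApxInv ψ) :=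
  ⟨h.2, h.1⟩

theorem BiKatetov.le_edist_add_add_s14 {ψ : X × Y → ℝ≥0∞} (h : BiKatetov ψ) (x x₀ : X) (y₀ y : Y) :
    ψ (x, y) ≤ edist x x₀ + ψ (x₀, y₀) + edist y₀ y := by
  calc ψ (x, y) ≤ edist x x₀ + ψ (x₀, y) := (h.1 y).le_edist_add x x₀
    _ ≤ edist x x₀ + (edist y y₀ + ψ (x₀, y₀)) := by grw [(h.2 x₀).le_edist_add y y₀]
    _ = edist x x₀ + ψ (x₀, y₀) + edist y₀ y := by rw [edist_comm y y₀]; ring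

/-- The lower Katětov bound for `trivExt`, before taking infima. -/
theorem BiKatetov.edist_le_add_add {ψ : X × Y → ℝ≥0∞} (h : BiKatetov ψ)
    (x x' x₀ x₀' : X) (y₀ y₀' y : Y) :
    edist x x' ≤ (edist x x₀ + ψ (x₀, y₀) + edist y₀ y) +
      (edist x' x₀' + ψ (x₀', y₀') + edist y₀' y) := by
  have hψ : ψ (x₀, y₀') ≤ edist y₀ y + edist y y₀' + ψ (x₀, y₀) := by
    grw [(h.2 x₀).le_edist_add y₀' y₀, edist_comm y₀' y₀, edist_triangle y₀ y y₀']
  calc edist x x' ≤ edist x x₀ + edist x₀ x₀' + edist x₀' x' := edist_triangle4 _ _ _ _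
    _ ≤ edist x x₀ + (ψ (x₀, y₀') + ψ (x₀', y₀')) + edist x₀' x' := by
        grw [(h.1 y₀').edist_le_add x₀ x₀']
    _ ≤ edist x x₀ + (edist y₀ y + edist y y₀' + ψ (x₀, y₀) + ψ (x₀', y₀')) + edist x₀' x' := by
        grw [hψ]
    _ = _ := by rw [edist_comm x₀' x', edist_comm y y₀']; ring

end Katetov

section TrivExt

variable {X Y : Type*} [MetricSpace X] [MetricSpace Y] {X₀ : Set X} {Y₀ : Set Y}

theorem trivExt_eq_iInf_edist (ψ : X × Y → ℝ≥0∞) (p : X × Y) :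
    trivExt X₀ Y₀ ψ p = ⨅ x₀ ∈ X₀, ⨅ y₀ ∈ Y₀, edist p.1 x₀ + ψ (x₀, y₀) + edist y₀ p.2 := by
  simp only [trivExt, edist_dist]

theorem trivExt_apply_swap (ψ : X × Y → ℝ≥0∞) (x : X) (y : Y) :
    trivExt Y₀ X₀ (ApxInv ψ) (y, x) = trivExt X₀ Y₀ ψ (x, y) := by
  simp only [trivExt_eq_iInf_edist, ApxInv]
  rw [iInf₂_comm]
  refine iInf_congr fun x₀ => iInf_congr fun _ => iInf_congr fun y₀ => iInf_congr fun _ => ?_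
  rw [edist_comm y y₀, edist_comm x₀ x]
  ring

theorem BiKatetov.le_trivExt {ψ : X × Y → ℝ≥0∞} (h : BiKatetov ψ) (p : X × Y) :
    ψ p ≤ trivExt X₀ Y₀ ψ p := by
  rw [trivExt_eq_iInf_edist]
  exact le_iInf₂ fun x₀ _ => le_iInf₂ fun y₀ _ => h.le_edist_add_add_s14 p.1 x₀ y₀ p.2

theorem trivExt_le_of_mem {ψ : X × Y → ℝ≥0∞} {p : X × Y} (hp : p ∈ X₀ ×ˢ Y₀) :
    trivExt X₀ Y₀ ψ p ≤ ψ p := by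
  rw [trivExt_eq_iInf_edist]
  refine (iInf₂_le p.1 hp.1).trans ((iInf₂_le p.2 hp.2).trans_eq ?_)
  simp

theorem trivExt_mono {ψ ρ : X × Y → ℝ≥0∞} (h : ∀ p ∈ X₀ ×ˢ Y₀, ρ p ≤ ψ p) (p : X × Y) :
    trivExt X₀ Y₀ ρ p ≤ trivExt X₀ Y₀ ψ p := by
  simp only [trivExt_eq_iInf_edist]
  gcongr with x₀ hx₀ y₀ hy₀
  exact h (x₀, y₀) ⟨hx₀, hy₀⟩

theorem trivExt_add_const (ψ : X × Y → ℝ≥0∞) (c : ℝ≥0∞) (p : X × Y) :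
    trivExt X₀ Y₀ (fun q => ψ q + c) p = trivExt X₀ Y₀ ψ p + c := by
  simp only [trivExt_eq_iInf_edist, ENNReal.iInf_add]
  refine iInf_congr fun x₀ => iInf_congr fun _ => iInf_congr fun y₀ => iInf_congr fun _ => ?_
  ring

theorem BiKatetov.katetov_trivExt_left {ψ : X × Y → ℝ≥0∞} (h : BiKatetov ψ) (y : Y) :
    Katetov fun x => trivExt X₀ Y₀ ψ (x, y) := by
  refine katetov_iff_edist.2 fun x x' => ⟨?_, ?_⟩
  · simp only [trivExt_eq_iInf_edist, ENNReal.add_iInf]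
    refine iInf₂_mono fun x₀ _ => iInf₂_mono fun y₀ _ => ?_
    calc edist x x₀ + ψ (x₀, y₀) + edist y₀ y
        ≤ edist x x' + edist x' x₀ + ψ (x₀, y₀) + edist y₀ y := by grw [edist_triangle x x' x₀]
      _ = _ := by ring
  · simp only [trivExt_eq_iInf_edist, ENNReal.add_iInf, ENNReal.iInf_add]
    exact le_iInf₂ fun x₀ _ => le_iInf₂ fun y₀ _ => le_iInf₂ fun x₀' _ => le_iInf₂ fun y₀' _ =>
      h.edist_le_add_add x x' x₀' x₀ y₀' y₀ y

theorem BiKatetov.trivExt {ψ : X × Y → ℝ≥0∞} (h : BiKatetov ψ) :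
    BiKatetov (trivExt X₀ Y₀ ψ) :=
  ⟨h.katetov_trivExt_left, fun x => by
    simpa only [trivExt_apply_swap] using h.inv.katetov_trivExt_left (X₀ := Y₀) (Y₀ := X₀) x⟩

end TrivExt

theorem ENNReal.Iic_add_mem_nhds (a : ℝ≥0∞) {ε : ℝ≥0∞} (hε : ε ≠ 0) : Iic (a + ε) ∈ 𝓝 a := by
  rcases eq_or_ne a ∞ with rfl | ha
  · simp
  · exact Iic_mem_nhds (ENNReal.lt_add_right ha hε)

theorem ENNReal.tendsto_Icc_add_ofReal (a : ℝ≥0∞) :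
    Tendsto (fun ε : ℝ => Icc a (a + ENNReal.ofReal ε)) (𝓝 0) (𝓝 a).smallSets := by
  refine tendsto_const_nhds.Icc ?_
  simpa using tendsto_const_nhds.add (ENNReal.continuous_ofReal.tendsto 0)

theorem exists_finite_pi_Icc_subset_of_mem_nhds {ι : Type*} {f : ι → ℝ≥0∞}
    {S : Set (ι → ℝ≥0∞)} (hS : S ∈ 𝓝 f) :
    ∃ I : Set ι, I.Finite ∧ ∃ ε : ℝ, 0 < ε ∧
      I.pi (fun i => Icc (f i) (f i + ENNReal.ofReal ε)) ⊆ S := by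
  rw [nhds_pi] at hS
  obtain ⟨I, hI, t, ht, hIt⟩ := Filter.mem_pi.1 hS
  have hsmall : ∀ᶠ ε in 𝓝[>] 0, ∀ i ∈ I, Icc (f i) (f i + ENNReal.ofReal ε) ⊆ t i :=
    hI.eventually_all.2 fun i _ =>
      tendsto_smallSets_iff.1
        ((ENNReal.tendsto_Icc_add_ofReal (f i)).mono_left nhdsWithin_le_nhds) _ (ht i)
  obtain ⟨ε, hεt, hε⟩ := (hsmall.and self_mem_nhdsWithin).exists
  exact ⟨I, hI, ε, hε, (pi_mono hεt).trans hIt⟩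

/-- `ψ < φ` (i.e. `ψ` lies in the interior of `{ρ : ρ ≤ φ}` in `Apx(X,Y)`)
iff there are finite `X₀ ⊆ X`, `Y₀ ⊆ Y` and `ε > 0` with
`φ ≥ ψ|_{X₀×Y₀} + ε`. -/
theorem strict_coarsening_iff {X Y : Type*} [MetricSpace X] [MetricSpace Y]
    (ψ φ : Apx X Y) :
    ψ ∈ interior {ρ : Apx X Y | ∀ p, ρ.1 p ≤ φ.1 p} ↔
      ∃ (X₀ : Set X) (Y₀ : Set Y), X₀.Finite ∧ Y₀.Finite ∧
        ∃ ε : ℝ, 0 < ε ∧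
          ∀ p, trivExt X₀ Y₀ ψ.1 p + ENNReal.ofReal ε ≤ φ.1 p := by
  rw [mem_interior_iff_mem_nhds]
  constructor
  · intro h
    obtain ⟨S, hS, hSφ⟩ := (mem_nhds_induced Subtype.val ψ _).1 h
    obtain ⟨I, hI, ε, hε, hIS⟩ := exists_finite_pi_Icc_subset_of_mem_nhds hS
    set X₀ := Prod.fst '' I
    set Y₀ := Prod.snd '' I
    have hρS : (fun p => trivExt X₀ Y₀ ψ.1 p + ENNReal.ofReal ε) ∈ S := hIS fun p hp =>
      ⟨ψ.2.le_trivExt p |>.trans le_self_add,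
        by grw [trivExt_le_of_mem ⟨mem_image_of_mem _ hp, mem_image_of_mem _ hp⟩]⟩
    exact ⟨X₀, Y₀, hI.image _, hI.image _, ε, hε, @hSφ ⟨_, ψ.2.trivExt.add_const _⟩ hρS⟩
  · rintro ⟨X₀, Y₀, hX₀, hY₀, ε, hε, hφ⟩
    have hnear : ∀ᶠ ρ : Apx X Y in 𝓝 ψ, ∀ p ∈ X₀ ×ˢ Y₀, ρ.1 p ≤ ψ.1 p + ENNReal.ofReal ε :=
      (hX₀.prod hY₀).eventually_all.2 fun p _ =>
        ((continuous_apply p).comp continuous_subtype_val).continuousAt.eventually_mem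
          (ENNReal.Iic_add_mem_nhds _ (ENNReal.ofReal_pos.2 hε).ne')
    filter_upwards [hnear] with ρ hρ p
    calc ρ.1 p ≤ trivExt X₀ Y₀ ρ.1 p := ρ.2.le_trivExt p
      _ ≤ trivExt X₀ Y₀ (fun q => ψ.1 q + ENNReal.ofReal ε) p := trivExt_mono hρ p
      _ = trivExt X₀ Y₀ ψ.1 p + ENNReal.ofReal ε := trivExt_add_const _ _ p
      _ ≤ φ.1 p := hφ p
end

section
/- If an approximate isometry ψ : X ⇝ Y is r-total and r-surjective (for r > 0), and also θ-total and θ-surjective for all θ > 0 in the limit sense below, then any pointwise decreasing sequence ψ = θ₀ ≥ θ₁ ≥ ⋯ of approximate isometries X ⇝ Y, where θ_{n+1} is 2^{-n}-total on a fixed countable dense subset {a_i} of X for even n and 2^{-n}-surjective on a fixed countable dense subset {b_i} of Y for odd n, has pointwise limit θ = lim θ_n equal to (the approximate isometry associated to) a surjective isometry X̂ → Ŷ of the completions; in particular, if X and Y are complete, θ is induced by a bijective isometry f : X → Y with d(fx,y) ≤ ψ(x,y) for all x,y. -/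
open scoped ENNReal

/-!
The pointwise limit `θ∞ = ⨅ n, θ n` of a decreasing sequence of approximate isometries is
again one. The back-and-forth conditions make `inf_y θ∞(a i, y) = 0` for every `i`, and since
`x ↦ inf_y θ∞(x, y)` is 1-Lipschitz this spreads from the dense sequence to all of `X`; symmetrically
for `Y`. In a complete space a Katětov function with infimum `0` attains it: points where it is
`< ε` lie within `2ε` of each other. So `θ∞(x, ·)` vanishes at some `f x`, which forces
`θ∞(x, y) = d(f x, y)`, and `f` is an isometry, onto because `θ∞(·, y)` vanishes somewhere too.
-/

open Filter Topology

namespace Katetov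

variable {X : Type*} [MetricSpace X] {ψ : X → ℝ≥0∞}

lemma le_edist_add_s15 (h : Katetov ψ) (x y : X) : ψ x ≤ edist x y + ψ y := by
  rw [edist_dist]; exact (h x y).1

lemma edist_le_add_s15 (h : Katetov ψ) (x y : X) : edist x y ≤ ψ x + ψ y := by
  rw [edist_dist]; exact (h x y).2

lemma eq_edist_of_eq_zero (h : Katetov ψ) {z : X} (hz : ψ z = 0) (x : X) :
    ψ x = edist x z :=
  le_antisymm (by simpa [hz] using h.le_edist_add_s15 x z)
    (by simpa [hz] using h.edist_le_add_s15 x z)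

lemma iInf {ψ : ℕ → X → ℝ≥0∞} (hψ : ∀ n, Katetov (ψ n)) (hanti : Antitone ψ) :
    Katetov fun x => ⨅ n, ψ n x := by
  intro x y
  constructor
  · rw [ENNReal.add_iInf]
    exact iInf_mono fun n => (hψ n x y).1
  · rw [ENNReal.iInf_add_iInf fun m n =>
      ⟨max m n, add_le_add (hanti (le_max_left m n) x) (hanti (le_max_right m n) y)⟩]
    exact le_iInf fun n => (hψ n x y).2

lemma exists_eq_zero_of_iInf_eq_zero [CompleteSpace X] (h : Katetov ψ) (h0 : ⨅ x, ψ x = 0) :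
    ∃ z, ψ z = 0 := by
  have hsmall (n : ℕ) : ∃ x, ψ x < (n : ℝ≥0∞)⁻¹ :=
    iInf_lt_iff.1 (h0 ▸ ENNReal.inv_pos.2 (ENNReal.natCast_ne_top n))
  choose u hu using hsmall
  have hu_le {n N : ℕ} (hn : N ≤ n) : ψ (u n) ≤ (N : ℝ≥0∞)⁻¹ :=
    (hu n).le.trans (ENNReal.inv_le_inv.2 (Nat.cast_le.2 hn))
  have hinv : Tendsto (fun N : ℕ => (N : ℝ≥0∞)⁻¹ + (N : ℝ≥0∞)⁻¹) atTop (𝓝 0) := by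
    simpa using ENNReal.tendsto_inv_nat_nhds_zero.add ENNReal.tendsto_inv_nat_nhds_zero
  have hcauchy : CauchySeq u := EMetric.cauchySeq_iff_le_tendsto_0.2
    ⟨_, fun n m N hn hm => (h.edist_le_add_s15 _ _).trans (add_le_add (hu_le hn) (hu_le hm)), hinv⟩
  obtain ⟨z, hz⟩ := cauchySeq_tendsto_of_complete hcauchy
  have hdist : Tendsto (fun n => edist z (u n)) atTop (𝓝 0) := by
    simpa only [edist_comm] using tendsto_iff_edist_tendsto_0.1 hz
  have hval : Tendsto (fun n => ψ (u n)) atTop (𝓝 0) :=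
    tendsto_of_tendsto_of_tendsto_of_le_of_le tendsto_const_nhds
      ENNReal.tendsto_inv_nat_nhds_zero (fun _ => zero_le) fun n => (hu n).le
  have hsum : Tendsto (fun n => edist z (u n) + ψ (u n)) atTop (𝓝 0) := by
    simpa using hdist.add hval
  exact ⟨z, le_antisymm (ge_of_tendsto' hsum fun n => h.le_edist_add_s15 z (u n)) zero_le⟩

end Katetov

namespace BiKatetov

variable {X Y : Type*} [MetricSpace X] [MetricSpace Y]

lemma apxInv {φ : X × Y → ℝ≥0∞} (h : BiKatetov φ) : BiKatetov (ApxInv φ) :=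
  ⟨h.2, h.1⟩

lemma iInf {θ : ℕ → X × Y → ℝ≥0∞} (hθ : ∀ n, BiKatetov (θ n)) (hanti : Antitone θ) :
    BiKatetov fun p => ⨅ n, θ n p :=
  ⟨fun y => Katetov.iInf (fun n => (hθ n).1 y) fun _ _ hmn x => hanti hmn (x, y),
    fun x => Katetov.iInf (fun n => (hθ n).2 x) fun _ _ hmn y => hanti hmn (x, y)⟩

lemma exists_isometryEquiv {φ : X × Y → ℝ≥0∞} (hφ : BiKatetov φ)
    (htot : ∀ x, ∃ y, φ (x, y) = 0) (hsur : ∀ y, ∃ x, φ (x, y) = 0) :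
    ∃ f : X ≃ᵢ Y, ∀ p, φ p = ENNReal.ofReal (dist (f p.1) p.2) := by
  choose f hf using htot
  have hφf (x : X) (y : Y) : φ (x, y) = edist (f x) y := by
    rw [(hφ.2 x).eq_edist_of_eq_zero (hf x) y, edist_comm]
  have hiso : Isometry f := fun x x' => by
    rw [← hφf, (hφ.1 (f x')).eq_edist_of_eq_zero (hf x')]
  have hsurj : Function.Surjective f := fun y =>
    let ⟨x, hx⟩ := hsur y
    ⟨x, edist_eq_zero.1 (by rw [← hφf, hx])⟩
  exact ⟨⟨Equiv.ofBijective f ⟨hiso.injective, hsurj⟩, hiso⟩,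
    fun ⟨x, y⟩ => (hφf x y).trans (edist_dist _ _)⟩

end BiKatetov

lemma iInf_eq_zero_of_denseRange {X Y ι : Type*} [MetricSpace X] {φ : X × Y → ℝ≥0∞}
    (hφ : ∀ y, Katetov fun x => φ (x, y)) {a : ι → X} (ha : DenseRange a)
    (h0 : ∀ i, ⨅ y, φ (a i, y) = 0) (x : X) : ⨅ y, φ (x, y) = 0 := by
  have hle (i : ι) : ⨅ y, φ (x, y) ≤ edist x (a i) :=
    calc ⨅ y, φ (x, y) ≤ ⨅ y, (edist x (a i) + φ (a i, y)) :=
          iInf_mono fun y => (hφ y).le_edist_add_s15 x (a i)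
      _ = edist x (a i) := by rw [← ENNReal.add_iInf, h0 i, add_zero]
  refine le_antisymm ?_ zero_le
  calc ⨅ y, φ (x, y) ≤ Metric.infEDist x (Set.range a) :=
        Metric.le_infEDist.2 (Set.forall_mem_range.2 hle)
    _ = 0 := Metric.mem_closure_iff_infEDist_zero.1 (ha x)

lemma iInf_iInf_eq_zero_of_frequently_lt {Y : Type*} {φ : ℕ → Y → ℝ≥0∞} {ε : ℕ → ℝ≥0∞}
    (hε : Tendsto ε atTop (𝓝 0)) (h : ∃ᶠ n in atTop, ∃ y m, φ m y < ε n) :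
    ⨅ y, ⨅ n, φ n y = 0 := by
  by_contra hne
  obtain ⟨n, hn, y, m, hy⟩ :=
    ((hε.eventually (gt_mem_nhds (pos_iff_ne_zero.2 hne))).and_frequently h).exists
  exact lt_irrefl _ ((((iInf_le _ y).trans (iInf_le _ m)).trans_lt hy).trans hn)

lemma tendsto_ofReal_two_zpow_neg :
    Tendsto (fun n : ℕ => ENNReal.ofReal ((2 : ℝ) ^ (-(n : ℤ)))) atTop (𝓝 0) := by
  have h := tendsto_pow_atTop_nhds_zero_of_lt_one (by norm_num : (0 : ℝ) ≤ 2⁻¹)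
    (by norm_num : (2⁻¹ : ℝ) < 1)
  simpa [zpow_neg, inv_pow] using ENNReal.tendsto_ofReal h

theorem backAndForth_limit_general {X Y : Type*} [MetricSpace X] [MetricSpace Y]
    [CompleteSpace X] [CompleteSpace Y]
    (a : ℕ → X) (b : ℕ → Y) (ha : DenseRange a) (hb : DenseRange b)
    (ψ : X × Y → ℝ≥0∞)
    (θ : ℕ → X × Y → ℝ≥0∞) (hθK : ∀ n, BiKatetov (θ n)) (hθ0 : θ 0 = ψ)
    (hdec : ∀ n p, θ (n + 1) p ≤ θ n p)
    (heven : ∀ n, Even n → ∀ i < n,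
      ∃ y, θ (n + 1) (a i, y) < ENNReal.ofReal ((2 : ℝ) ^ (-(n : ℤ))))
    (hodd : ∀ n, Odd n → ∀ i < n,
      ∃ x, θ (n + 1) (x, b i) < ENNReal.ofReal ((2 : ℝ) ^ (-(n : ℤ)))) :
    ∃ f : X ≃ᵢ Y,
      (∀ p : X × Y, (⨅ n, θ n p) = ENNReal.ofReal (dist (f p.1) p.2)) ∧
        ∀ p : X × Y, ENNReal.ofReal (dist (f p.1) p.2) ≤ ψ p := by
  set θlim : X × Y → ℝ≥0∞ := fun p => ⨅ n, θ n p
  have hK : BiKatetov θlim := BiKatetov.iInf hθK (antitone_nat_of_succ_le fun n p => hdec n p)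
  have htot (x : X) : ⨅ y, θlim (x, y) = 0 :=
    iInf_eq_zero_of_denseRange hK.1 ha (fun i =>
      iInf_iInf_eq_zero_of_frequently_lt tendsto_ofReal_two_zpow_neg <|
        (Nat.frequently_even.and_eventually (eventually_gt_atTop i)).mono fun n hn =>
          let ⟨y, hy⟩ := heven n hn.1 i hn.2
          ⟨y, n + 1, hy⟩) x
  have hsur (y : Y) : ⨅ x, ApxInv θlim (y, x) = 0 :=
    iInf_eq_zero_of_denseRange hK.apxInv.1 hb (fun i =>
      iInf_iInf_eq_zero_of_frequently_lt tendsto_ofReal_two_zpow_neg <|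
        (Nat.frequently_odd.and_eventually (eventually_gt_atTop i)).mono fun n hn =>
          let ⟨x, hx⟩ := hodd n hn.1 i hn.2
          ⟨x, n + 1, hx⟩) y
  obtain ⟨f, hf⟩ := hK.exists_isometryEquiv
    (fun x => (hK.2 x).exists_eq_zero_of_iInf_eq_zero (htot x))
    (fun y => (hK.apxInv.2 y).exists_eq_zero_of_iInf_eq_zero (hsur y))
  refine ⟨f, hf, fun p => ?_⟩
  rw [← hf p, ← hθ0]
  exact iInf_le _ 0

/-- The back-and-forth limit: a decreasing sequence of approximate isometries
refining `ψ`, alternately `2^{-n}`-total on a dense sequence of `X` and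
`2^{-n}`-surjective on a dense sequence of `Y`, converges pointwise to (the
approximate isometry associated to) a bijective isometry `f : X → Y`
satisfying `d(fx,y) ≤ ψ(x,y)`, when `X` and `Y` are complete. -/
theorem backAndForth_limit {X Y : Type*} [MetricSpace X] [MetricSpace Y]
    [CompleteSpace X] [CompleteSpace Y]
    (a : ℕ → X) (b : ℕ → Y) (ha : DenseRange a) (hb : DenseRange b)
    (ψ : X × Y → ℝ≥0∞) (hψ : BiKatetov ψ) (r : ℝ) (hr : 0 < r)
    (htot : ∀ x : X, ∀ s : ℝ, r < s → ∃ y, ψ (x, y) < ENNReal.ofReal s)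
    (hsur : ∀ y : Y, ∀ s : ℝ, r < s → ∃ x, ψ (x, y) < ENNReal.ofReal s)
    (θ : ℕ → X × Y → ℝ≥0∞) (hθK : ∀ n, BiKatetov (θ n)) (hθ0 : θ 0 = ψ)
    (hdec : ∀ n p, θ (n + 1) p ≤ θ n p)
    (heven : ∀ n, Even n → ∀ i < n,
      ∃ y, θ (n + 1) (a i, y) < ENNReal.ofReal ((2 : ℝ) ^ (-(n : ℤ))))
    (hodd : ∀ n, Odd n → ∀ i < n,
      ∃ x, θ (n + 1) (x, b i) < ENNReal.ofReal ((2 : ℝ) ^ (-(n : ℤ)))) :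
    ∃ f : X ≃ᵢ Y,
      (∀ p : X × Y, (⨅ n, θ n p) = ENNReal.ofReal (dist (f p.1) p.2)) ∧
        ∀ p : X × Y, ENNReal.ofReal (dist (f p.1) p.2) ≤ ψ p :=
  backAndForth_limit_general a b ha hb ψ θ hθK hθ0 hdec heven hodd
end

section
/- (Henson) For two n-tuples ā, b̄ generating finite dimensional real Banach spaces, the infimum over all Banach spaces C and isometric linear embeddings f : ⟨ā⟩ → C, g : ⟨b̄⟩ → C of max_i ‖f a_i − g b_i‖ equals sup over (s_i) with Σ|s_i| = 1 of | ‖Σ s_i a_i‖ − ‖Σ s_i b_i‖ |. -/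
/-!
Any pair of embeddings `f, g` into a common space bounds the gap
`|‖∑ sᵢ aᵢ‖ - ‖∑ sᵢ bᵢ‖| = |‖f (∑ sᵢ aᵢ)‖ - ‖g (∑ sᵢ bᵢ)‖|` by `∑ |sᵢ| ‖f aᵢ - g bᵢ‖`, which gives
`≥`. For `≤`, let `R` be the supremum of the gap on the `ℓ¹`-sphere, so that by homogeneity the gap
at `t` is at most `R ∑ |tᵢ|`. Amalgamate `A` and `B` as the quotient of the `ℓ¹`-sum
`A ⊕₁ B ⊕₁ ℓ¹(ι)` by the span of the vectors `(aᵢ, -bᵢ, -R eᵢ)`: there `aᵢ - bᵢ` becomes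
`R eᵢ`, of norm `R`, while the bound on the gap is exactly what keeps the quotient map isometric on
`A` and on `B`.
-/

section NormGap

variable {ι E F G : Type*} [Fintype ι] [SeminormedAddCommGroup E] [NormedSpace ℝ E]
  [SeminormedAddCommGroup F] [NormedSpace ℝ F] [SeminormedAddCommGroup G] [NormedSpace ℝ G]
  (a : ι → E) (b : ι → F)

def normGap (t : ι → ℝ) : ℝ := |‖∑ i, t i • a i‖ - ‖∑ i, t i • b i‖|

theorem normGap_le_sum_mul_norm_sub (f : E →ₗᵢ[ℝ] G) (g : F →ₗᵢ[ℝ] G) (t : ι → ℝ) :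
    normGap a b t ≤ ∑ i, |t i| * ‖f (a i) - g (b i)‖ :=
  calc normGap a b t = |‖f (∑ i, t i • a i)‖ - ‖g (∑ i, t i • b i)‖| := by
        rw [f.norm_map, g.norm_map, normGap]
    _ ≤ ‖f (∑ i, t i • a i) - g (∑ i, t i • b i)‖ := abs_norm_sub_norm_le _ _
    _ = ‖∑ i, t i • (f (a i) - g (b i))‖ := by
        simp only [map_sum, map_smul, smul_sub, Finset.sum_sub_distrib]
    _ ≤ ∑ i, |t i| * ‖f (a i) - g (b i)‖ := by
        refine (norm_sum_le _ _).trans_eq ?_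
        simp only [norm_smul, Real.norm_eq_abs]

theorem normGap_smul (c : ℝ) (t : ι → ℝ) : normGap a b (c • t) = |c| * normGap a b t := by
  simp only [normGap, Pi.smul_apply, smul_eq_mul, mul_smul, ← Finset.smul_sum, norm_smul,
    Real.norm_eq_abs, ← mul_sub, abs_mul, abs_abs]

theorem normGap_le_mul_sum_abs {R : ℝ}
    (hR : ∀ s : ι → ℝ, ∑ i, |s i| = 1 → normGap a b s ≤ R) (t : ι → ℝ) :
    normGap a b t ≤ R * ∑ i, |t i| := by
  obtain hT | hT := (Finset.sum_nonneg fun i _ => abs_nonneg (t i)).eq_or_lt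
  · have ht : t = 0 := funext fun i => abs_eq_zero.1 <|
      (Finset.sum_eq_zero_iff_of_nonneg fun i _ => abs_nonneg (t i)).1 hT.symm i (Finset.mem_univ i)
    rw [← hT, mul_zero]
    simp [ht, normGap]
  · have hs : ∑ i, |((∑ j, |t j|)⁻¹ • t) i| = 1 := by
      simp only [Pi.smul_apply, smul_eq_mul, abs_mul, abs_inv, abs_of_pos hT, ← Finset.mul_sum]
      exact inv_mul_cancel₀ hT.ne'
    calc normGap a b t = (∑ i, |t i|) * normGap a b ((∑ j, |t j|)⁻¹ • t) := by
          rw [normGap_smul, abs_inv, abs_of_pos hT, mul_inv_cancel_left₀ hT.ne']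
      _ ≤ (∑ i, |t i|) * R := mul_le_mul_of_nonneg_left (hR _ hs) hT.le
      _ = R * ∑ i, |t i| := mul_comm _ _

theorem norm_sum_smul_le_sum_norm {s : ι → ℝ} (hs : ∀ i, |s i| ≤ 1) (v : ι → E) :
    ‖∑ i, s i • v i‖ ≤ ∑ i, ‖v i‖ :=
  (norm_sum_le _ _).trans <| Finset.sum_le_sum fun i _ => by
    rw [norm_smul, Real.norm_eq_abs]
    exact mul_le_of_le_one_left (norm_nonneg _) (hs i)

theorem bddAbove_normGap_sum_abs_eq_one :
    BddAbove (Set.range fun s : {s : ι → ℝ // ∑ i, |s i| = 1} => normGap a b s.1) := by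
  refine ⟨∑ i, (‖a i‖ + ‖b i‖), Set.forall_mem_range.2 fun ⟨s, hs⟩ => ?_⟩
  have hs1 : ∀ i, |s i| ≤ 1 := fun i =>
    hs ▸ Finset.single_le_sum (f := fun j => |s j|) (fun j _ => abs_nonneg _) (Finset.mem_univ i)
  calc normGap a b s ≤ ‖∑ i, s i • a i‖ + ‖∑ i, s i • b i‖ :=
        abs_sub_le_of_nonneg_of_le (norm_nonneg _) (le_add_of_nonneg_right (norm_nonneg _))
          (norm_nonneg _) (le_add_of_nonneg_left (norm_nonneg _))
    _ ≤ ∑ i, (‖a i‖ + ‖b i‖) := by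
        rw [Finset.sum_add_distrib]
        exact add_le_add (norm_sum_smul_le_sum_norm hs1 a) (norm_sum_smul_le_sum_norm hs1 b)

theorem iSup_normGap_le_iSup_norm_sub (f : E →ₗᵢ[ℝ] G) (g : F →ₗᵢ[ℝ] G) :
    ⨆ s : {s : ι → ℝ // ∑ i, |s i| = 1}, normGap a b s.1 ≤ ⨆ i, ‖f (a i) - g (b i)‖ := by
  have hM : 0 ≤ ⨆ i, ‖f (a i) - g (b i)‖ := Real.iSup_nonneg fun _ => norm_nonneg _
  refine Real.iSup_le (fun ⟨s, hs⟩ => ?_) hM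
  calc normGap a b s ≤ ∑ i, |s i| * ‖f (a i) - g (b i)‖ := normGap_le_sum_mul_norm_sub a b f g s
    _ ≤ ∑ i, |s i| * ⨆ i, ‖f (a i) - g (b i)‖ := by
        gcongr with i
        exact le_ciSup (Set.finite_range fun i => ‖f (a i) - g (b i)‖).bddAbove i
    _ = ⨆ i, ‖f (a i) - g (b i)‖ := by rw [← Finset.sum_mul, hs, one_mul]

end NormGap

section Amalgam

universe u

variable {A B ι : Type u} [NormedAddCommGroup A] [NormedSpace ℝ A]
  [NormedAddCommGroup B] [NormedSpace ℝ B] [Fintype ι]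

abbrev L1Sum (A B ι : Type u) :=
  WithLp 1 (A × WithLp 1 (B × PiLp 1 (fun _ : ι => ℝ)))

def l1Embed : A × B × (ι → ℝ) →ₗ[ℝ] L1Sum A B ι where
  toFun p := WithLp.toLp 1 (p.1, WithLp.toLp 1 (p.2.1, WithLp.toLp 1 p.2.2))
  map_add' _ _ := rfl
  map_smul' _ _ := rfl

theorem norm_l1Embed (x : A) (y : B) (t : ι → ℝ) :
    ‖l1Embed (x, y, t)‖ = ‖x‖ + ‖y‖ + ∑ i, |t i| := by
  change ‖WithLp.toLp 1 (x, WithLp.toLp 1 (y, WithLp.toLp 1 t))‖ = _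
  simp [WithLp.prod_norm_eq_of_L1, PiLp.norm_eq_of_L1, add_assoc]

variable (a : ι → A) (b : ι → B) (r : ℝ)

noncomputable def amalgamRelation : (ι → ℝ) →ₗ[ℝ] L1Sum A B ι :=
  l1Embed ∘ₗ (Fintype.linearCombination ℝ a).prod
    ((-Fintype.linearCombination ℝ b).prod (-r • LinearMap.id))

theorem amalgamRelation_apply (t : ι → ℝ) :
    amalgamRelation a b r t = l1Embed (∑ i, t i • a i, -∑ i, t i • b i, -r • t) := by
  simp [amalgamRelation, Fintype.linearCombination_apply]

abbrev Amalgam := L1Sum A B ι ⧸ LinearMap.range (amalgamRelation a b r)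

instance isClosed_range_amalgamRelation :
    IsClosed (LinearMap.range (amalgamRelation a b r) : Set (L1Sum A B ι)) :=
  Submodule.closed_of_finiteDimensional _

variable {a b r}

theorem le_norm_mk_l1Embed_iff (hr0 : 0 ≤ r) {c : ℝ} (x : A) (y : B) :
    c ≤ ‖(Submodule.Quotient.mk (l1Embed (x, y, 0)) : Amalgam a b r)‖ ↔
      ∀ t : ι → ℝ, c ≤ ‖x - ∑ i, t i • a i‖ + ‖y + ∑ i, t i • b i‖ + r * ∑ i, |t i| := by
  have hnorm : ‖(Submodule.Quotient.mk (l1Embed (x, y, 0)) : Amalgam a b r)‖ =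
      Metric.infDist (l1Embed (x, y, 0))
        (LinearMap.range (amalgamRelation a b r) : Set (L1Sum A B ι)) :=
    QuotientAddGroup.norm_mk _
  rw [hnorm, Metric.le_infDist ⟨0, Submodule.zero_mem _⟩]
  simp only [SetLike.mem_coe, LinearMap.mem_range, forall_exists_index, forall_apply_eq_imp_iff,
    dist_eq_norm, amalgamRelation_apply, ← map_sub, norm_l1Embed, Prod.mk_sub_mk,
    sub_neg_eq_add, zero_sub, Pi.neg_apply, Pi.smul_apply, smul_eq_mul, neg_mul, neg_neg, abs_mul,
    abs_of_nonneg hr0, ← Finset.mul_sum]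

theorem norm_mk_l1Embed_inl (hr0 : 0 ≤ r) (hr : ∀ t, normGap a b t ≤ r * ∑ i, |t i|) (x : A) :
    ‖(Submodule.Quotient.mk (l1Embed (x, 0, 0)) : Amalgam a b r)‖ = ‖x‖ := by
  refine le_antisymm ((Submodule.Quotient.norm_mk_le _ _).trans (by simp [norm_l1Embed]))
    ((le_norm_mk_l1Embed_iff hr0 x 0).2 fun t => ?_)
  have hgap := (le_abs_self _).trans (hr t)
  have htri := norm_le_norm_add_norm_sub' x (∑ i, t i • a i)
  rw [zero_add]
  linarith

theorem norm_mk_l1Embed_inr (hr0 : 0 ≤ r) (hr : ∀ t, normGap a b t ≤ r * ∑ i, |t i|) (y : B) :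
    ‖(Submodule.Quotient.mk (l1Embed (0, y, 0)) : Amalgam a b r)‖ = ‖y‖ := by
  refine le_antisymm ((Submodule.Quotient.norm_mk_le _ _).trans (by simp [norm_l1Embed]))
    ((le_norm_mk_l1Embed_iff hr0 0 y).2 fun t => ?_)
  have hgap := (neg_le_abs _).trans (hr t)
  have htri := norm_le_add_norm_add y (∑ i, t i • b i)
  rw [zero_sub, norm_neg]
  linarith

theorem norm_mk_l1Embed_pair_le (hr0 : 0 ≤ r) (i : ι) :
    ‖(Submodule.Quotient.mk (l1Embed (a i, -b i, 0)) : Amalgam a b r)‖ ≤ r := by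
  classical
  have hmk : (Submodule.Quotient.mk (l1Embed (a i, -b i, 0)) : Amalgam a b r) =
      Submodule.Quotient.mk (l1Embed (0, 0, r • Pi.single i 1)) := by
    refine (Submodule.Quotient.eq _).2 ⟨Pi.single i 1, ?_⟩
    simp [amalgamRelation_apply, Pi.single_apply, ← map_sub]
  rw [hmk]
  refine (Submodule.Quotient.norm_mk_le _ _).trans_eq ?_
  simp [norm_l1Embed, Pi.single_apply, apply_ite abs, abs_of_nonneg hr0]

theorem exists_linearIsometry_pair_norm_sub_le [CompleteSpace A] [CompleteSpace B]
    (hr0 : 0 ≤ r) (hr : ∀ t, normGap a b t ≤ r * ∑ i, |t i|) :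
    ∃ (C : Type u) (_ : NormedAddCommGroup C) (_ : NormedSpace ℝ C) (_ : CompleteSpace C)
      (f : A →ₗᵢ[ℝ] C) (g : B →ₗᵢ[ℝ] C), ∀ i, ‖f (a i) - g (b i)‖ ≤ r := by
  let q := (LinearMap.range (amalgamRelation a b r)).mkQ ∘ₗ l1Embed
  let f : A →ₗᵢ[ℝ] Amalgam a b r :=
    { toLinearMap := q ∘ₗ LinearMap.inl ℝ A (B × (ι → ℝ)),
      norm_map' := norm_mk_l1Embed_inl hr0 hr }
  let g : B →ₗᵢ[ℝ] Amalgam a b r :=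
    { toLinearMap := q ∘ₗ LinearMap.inr ℝ A (B × (ι → ℝ)) ∘ₗ LinearMap.inl ℝ B (ι → ℝ),
      norm_map' := norm_mk_l1Embed_inr hr0 hr }
  refine ⟨Amalgam a b r, inferInstance, inferInstance, inferInstance, f, g, fun i => ?_⟩
  have hfg : f (a i) - g (b i) = q (a i, -b i, 0) := by
    change q (a i, 0, 0) - q (0, b i, 0) = _
    rw [← map_sub]
    simp
  rw [hfg]
  exact norm_mk_l1Embed_pair_le hr0 i

end Amalgam

theorem henson_distance_formula_general {A B : Type} [NormedAddCommGroup A]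
    [NormedSpace ℝ A] [NormedAddCommGroup B] [NormedSpace ℝ B]
    [CompleteSpace A] [CompleteSpace B]
    (n : ℕ) (a : Fin n → A) (b : Fin n → B) :
    sInf { r : ℝ | ∃ (C : Type) (_ : NormedAddCommGroup C)
        (_ : NormedSpace ℝ C) (_ : CompleteSpace C)
        (f : A →ₗᵢ[ℝ] C) (g : B →ₗᵢ[ℝ] C),
        r = ⨆ i, ‖f (a i) - g (b i)‖ } =
      ⨆ s : {s : Fin n → ℝ // ∑ i, |s i| = 1},
        |‖∑ i, s.1 i • a i‖ - ‖∑ i, s.1 i • b i‖| := by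
  change _ = ⨆ s : {s : Fin n → ℝ // ∑ i, |s i| = 1}, normGap a b s.1
  set R := ⨆ s : {s : Fin n → ℝ // ∑ i, |s i| = 1}, normGap a b s.1
  have hR0 : 0 ≤ R := Real.iSup_nonneg fun _ => abs_nonneg _
  have hgap : ∀ t, normGap a b t ≤ R * ∑ i, |t i| := normGap_le_mul_sum_abs a b
    fun s hs => le_ciSup (bddAbove_normGap_sum_abs_eq_one a b) ⟨s, hs⟩
  refine IsLeast.csInf_eq ⟨?_, ?_⟩
  · obtain ⟨C, hC₁, hC₂, hC₃, f, g, hfg⟩ := exists_linearIsometry_pair_norm_sub_le hR0 hgap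
    exact ⟨C, hC₁, hC₂, hC₃, f, g,
      le_antisymm (iSup_normGap_le_iSup_norm_sub a b f g) (Real.iSup_le hfg hR0)⟩
  · rintro _ ⟨C, _, _, _, f, g, rfl⟩
    exact iSup_normGap_le_iSup_norm_sub a b f g

/-- (Henson) For `n`-tuples `ā`, `b̄` spanning finite dimensional real Banach
spaces, the infimum over all Banach spaces `C` and isometric linear embeddings
`f : ⟨ā⟩ → C`, `g : ⟨b̄⟩ → C` of `max_i ‖f aᵢ − g bᵢ‖` equals
`sup_{Σ|sᵢ|=1} | ‖Σ sᵢ aᵢ‖ − ‖Σ sᵢ bᵢ‖ |`. -/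
theorem henson_distance_formula {A B : Type} [NormedAddCommGroup A]
    [NormedSpace ℝ A] [NormedAddCommGroup B] [NormedSpace ℝ B]
    [CompleteSpace A] [CompleteSpace B]
    (n : ℕ) (hn : 0 < n) (a : Fin n → A) (b : Fin n → B)
    (ha : Submodule.span ℝ (Set.range a) = ⊤)
    (hb : Submodule.span ℝ (Set.range b) = ⊤) :
    sInf { r : ℝ | ∃ (C : Type) (_ : NormedAddCommGroup C)
        (_ : NormedSpace ℝ C) (_ : CompleteSpace C)
        (f : A →ₗᵢ[ℝ] C) (g : B →ₗᵢ[ℝ] C),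
        r = ⨆ i, ‖f (a i) - g (b i)‖ } =
      ⨆ s : {s : Fin n → ℝ // ∑ i, |s i| = 1},
        |‖∑ i, s.1 i • a i‖ - ‖∑ i, s.1 i • b i‖| :=
  henson_distance_formula_general n a b
end

section
/- Given n-tuples ā, b̄ in real Banach spaces with r = sup_{Σ|s_i|=1} | ‖Σ s_i a_i‖ − ‖Σ s_i b_i‖ |, the formula ‖x − y‖' = inf_{s̄} ( ‖x − Σ s_i a_i‖ + ‖y − Σ s_i b_i‖ + r Σ|s_i| ) on the direct sum E = ⟨ā⟩ ⊕ ⟨b̄⟩ defines a seminorm on E whose restriction to ⟨ā⟩ equals the original norm of ⟨ā⟩, whose restriction to ⟨b̄⟩ equals the original norm of ⟨b̄⟩, and which satisfies ‖a_i − b_i‖' ≤ r for all i. -/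
open scoped BigOperators

/-- The amalgamation seminorm: on `E = A ⊕ B` (pairs `(x, y)` representing
`x + y`, so that `aᵢ − bᵢ` is `(aᵢ, −bᵢ)`), the formula
`‖x − y‖' = inf_s̄ (‖x − Σ sᵢaᵢ‖ + ‖y − Σ sᵢbᵢ‖ + r Σ|sᵢ|)` defines a seminorm
restricting to the norms of `A` and `B`, with `‖aᵢ − bᵢ‖' ≤ r`. -/
theorem amalgamation_seminorm {A B : Type} [NormedAddCommGroup A]
    [NormedSpace ℝ A] [NormedAddCommGroup B] [NormedSpace ℝ B]
    (n : ℕ) (a : Fin n → A) (b : Fin n → B)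
    (ha : Submodule.span ℝ (Set.range a) = ⊤)
    (hb : Submodule.span ℝ (Set.range b) = ⊤)
    (r : ℝ)
    (hr : r = ⨆ s : {s : Fin n → ℝ // ∑ i, |s i| = 1},
      |‖∑ i, s.1 i • a i‖ - ‖∑ i, s.1 i • b i‖|)
    (N : A × B → ℝ)
    (hN : ∀ p : A × B, N p = ⨅ s : Fin n → ℝ,
      (‖p.1 - ∑ i, s i • a i‖ + ‖p.2 + ∑ i, s i • b i‖ + r * ∑ i, |s i|)) :
    (∀ p q : A × B, N (p + q) ≤ N p + N q) ∧
      (∀ (c : ℝ) (p : A × B), N (c • p) = |c| * N p) ∧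
      (∀ x : A, N (x, 0) = ‖x‖) ∧
      (∀ y : B, N (0, y) = ‖y‖) ∧
      (∀ i, N (a i, -b i) ≤ r) := by
  clear ha hb
  let F : A × B → (Fin n → ℝ) → ℝ := fun p s =>
    ‖p.1 - ∑ i, s i • a i‖ + ‖p.2 + ∑ i, s i • b i‖ + r * ∑ i, |s i|
  have hN' : ∀ p, N p = ⨅ s, F p s := hN
  have hr0 : 0 ≤ r := hr ▸ Real.iSup_nonneg fun s => abs_nonneg _
  have habs1 : ∀ (s : Fin n → ℝ), ∑ i, |s i| = 1 → ∀ i, |s i| ≤ 1 := by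
    intro s hs i
    rw [← hs]
    exact Finset.single_le_sum (f := fun j => |s j|) (fun j _ => abs_nonneg _)
      (Finset.mem_univ i)
  have hbdd : BddAbove (Set.range fun s : {s : Fin n → ℝ // ∑ i, |s i| = 1} =>
      |‖∑ i, s.1 i • a i‖ - ‖∑ i, s.1 i • b i‖|) := by
    refine ⟨(∑ i, ‖a i‖) + ∑ i, ‖b i‖, ?_⟩
    rintro x ⟨s, rfl⟩
    have h1 : ‖∑ i, s.1 i • a i‖ ≤ ∑ i, ‖a i‖ := by
      refine (norm_sum_le _ _).trans (Finset.sum_le_sum fun i _ => ?_)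
      rw [norm_smul, Real.norm_eq_abs]
      exact mul_le_of_le_one_left (norm_nonneg _) (habs1 s.1 s.2 i)
    have h2 : ‖∑ i, s.1 i • b i‖ ≤ ∑ i, ‖b i‖ := by
      refine (norm_sum_le _ _).trans (Finset.sum_le_sum fun i _ => ?_)
      rw [norm_smul, Real.norm_eq_abs]
      exact mul_le_of_le_one_left (norm_nonneg _) (habs1 s.1 s.2 i)
    have h3 := norm_nonneg (∑ i, s.1 i • a i)
    have h4 := norm_nonneg (∑ i, s.1 i • b i)
    rw [abs_sub_le_iff]
    constructor <;> linarith
  have hkey : ∀ s : Fin n → ℝ,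
      |‖∑ i, s i • a i‖ - ‖∑ i, s i • b i‖| ≤ r * ∑ i, |s i| := by
    intro s
    have hT0 : 0 ≤ ∑ i, |s i| := Finset.sum_nonneg fun i _ => abs_nonneg _
    rcases eq_or_lt_of_le hT0 with hT | hT
    · have hz : ∀ i, s i = 0 := by
        intro i
        have := (Finset.sum_eq_zero_iff_of_nonneg
          (fun i _ => abs_nonneg (s i))).1 hT.symm i (Finset.mem_univ i)
        exact abs_eq_zero.1 this
      simp [hz]
    · set T := ∑ i, |s i| with hTdef
      set t : Fin n → ℝ := fun i => s i / T with ht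
      have hts : ∑ i, |t i| = 1 := by
        simp only [ht, abs_div, abs_of_pos hT]
        rw [← Finset.sum_div, ← hTdef]
        exact div_self (ne_of_gt hT)
      have hle : |‖∑ i, t i • a i‖ - ‖∑ i, t i • b i‖| ≤ r := by
        rw [hr]
        exact le_ciSup hbdd ⟨t, hts⟩
      have hta : ∑ i, t i • a i = T⁻¹ • ∑ i, s i • a i := by
        rw [Finset.smul_sum]
        refine Finset.sum_congr rfl fun i _ => ?_
        rw [smul_smul]
        show (s i / T) • a i = (T⁻¹ * s i) • a i
        rw [div_eq_inv_mul]
      have htb : ∑ i, t i • b i = T⁻¹ • ∑ i, s i • b i := by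
        rw [Finset.smul_sum]
        refine Finset.sum_congr rfl fun i _ => ?_
        rw [smul_smul]
        show (s i / T) • b i = (T⁻¹ * s i) • b i
        rw [div_eq_inv_mul]
      rw [hta, htb, norm_smul, norm_smul, Real.norm_eq_abs,
        abs_of_pos (inv_pos.2 hT), ← mul_sub, abs_mul,
        abs_of_pos (inv_pos.2 hT)] at hle
      have := mul_le_mul_of_nonneg_left hle (le_of_lt hT)
      rw [← mul_assoc, mul_inv_cancel₀ (ne_of_gt hT), one_mul] at this
      linarith [this]
  have hFnn : ∀ p s, 0 ≤ F p s := fun p s =>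
    add_nonneg (add_nonneg (norm_nonneg _) (norm_nonneg _))
      (mul_nonneg hr0 (Finset.sum_nonneg fun i _ => abs_nonneg _))
  have hbb : ∀ p : A × B, BddBelow (Set.range (F p)) := fun p =>
    ⟨0, by rintro x ⟨s, rfl⟩; exact hFnn p s⟩
  have hNle : ∀ (p : A × B) (s : Fin n → ℝ), N p ≤ F p s := fun p s =>
    hN' p ▸ ciInf_le (hbb p) s
  have hleN : ∀ (p : A × B) (z : ℝ), (∀ s, z ≤ F p s) → z ≤ N p := fun p z h =>
    hN' p ▸ le_ciInf h
  have part1 : ∀ p q : A × B, N (p + q) ≤ N p + N q := by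
    intro p q
    have key : ∀ s t : Fin n → ℝ, N (p + q) ≤ F p s + F q t := by
      intro s t
      refine (hNle (p + q) (s + t)).trans ?_
      have e1 : (p + q).1 - ∑ i, (s + t) i • a i =
          (p.1 - ∑ i, s i • a i) + (q.1 - ∑ i, t i • a i) := by
        simp only [Prod.fst_add, Pi.add_apply, add_smul, Finset.sum_add_distrib]
        abel
      have e2 : (p + q).2 + ∑ i, (s + t) i • b i =
          (p.2 + ∑ i, s i • b i) + (q.2 + ∑ i, t i • b i) := by
        simp only [Prod.snd_add, Pi.add_apply, add_smul, Finset.sum_add_distrib]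
        abel
      have hs' : ∑ i, |(s + t) i| ≤ (∑ i, |s i|) + ∑ i, |t i| := by
        rw [← Finset.sum_add_distrib]
        exact Finset.sum_le_sum fun i _ => abs_add_le _ _
      have n3 : r * ∑ i, |(s + t) i| ≤ r * ((∑ i, |s i|) + ∑ i, |t i|) :=
        mul_le_mul_of_nonneg_left hs' hr0
      have n1 := norm_add_le (p.1 - ∑ i, s i • a i) (q.1 - ∑ i, t i • a i)
      have n2 := norm_add_le (p.2 + ∑ i, s i • b i) (q.2 + ∑ i, t i • b i)
      show ‖(p + q).1 - ∑ i, (s + t) i • a i‖ + ‖(p + q).2 + ∑ i, (s + t) i • b i‖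
          + r * ∑ i, |(s + t) i| ≤ _
      rw [e1, e2]
      show _ ≤ (‖p.1 - ∑ i, s i • a i‖ + ‖p.2 + ∑ i, s i • b i‖ + r * ∑ i, |s i|)
        + (‖q.1 - ∑ i, t i • a i‖ + ‖q.2 + ∑ i, t i • b i‖ + r * ∑ i, |t i|)
      linarith
    rw [hN' p, hN' q]
    have h1 : ∀ s, N (p + q) - ⨅ t, F q t ≤ F p s := by
      intro s
      rw [sub_le_iff_le_add]
      have h2 : ∀ t, N (p + q) - F p s ≤ F q t := fun t => by
        rw [sub_le_iff_le_add]
        linarith [key s t]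
      have := le_ciInf h2
      linarith
    have := le_ciInf h1
    linarith
  have part3 : ∀ x : A, N (x, 0) = ‖x‖ := by
    intro x
    apply le_antisymm
    · refine (hNle (x, 0) 0).trans (le_of_eq ?_)
      show ‖x - ∑ i, (0:ℝ) • a i‖ + ‖(0:B) + ∑ i, (0:ℝ) • b i‖ + r * ∑ i, |(0:ℝ)| = ‖x‖
      simp
    · refine hleN (x, 0) ‖x‖ fun s => ?_
      have h1 : ‖x‖ ≤ ‖x - ∑ i, s i • a i‖ + ‖∑ i, s i • a i‖ := by
        simpa using norm_add_le (x - ∑ i, s i • a i) (∑ i, s i • a i)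
      have h2 : ‖∑ i, s i • a i‖ - ‖∑ i, s i • b i‖ ≤ r * ∑ i, |s i| :=
        (le_abs_self _).trans (hkey s)
      show ‖x‖ ≤ ‖x - ∑ i, s i • a i‖ + ‖(0:B) + ∑ i, s i • b i‖ + r * ∑ i, |s i|
      rw [zero_add]
      linarith
  have part4 : ∀ y : B, N (0, y) = ‖y‖ := by
    intro y
    apply le_antisymm
    · refine (hNle (0, y) 0).trans (le_of_eq ?_)
      show ‖(0:A) - ∑ i, (0:ℝ) • a i‖ + ‖y + ∑ i, (0:ℝ) • b i‖ + r * ∑ i, |(0:ℝ)| = ‖y‖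
      simp
    · refine hleN (0, y) ‖y‖ fun s => ?_
      have h1 : ‖y‖ ≤ ‖y + ∑ i, s i • b i‖ + ‖∑ i, s i • b i‖ := by
        simpa using norm_sub_le (y + ∑ i, s i • b i) (∑ i, s i • b i)
      have h2 : ‖∑ i, s i • b i‖ - ‖∑ i, s i • a i‖ ≤ r * ∑ i, |s i| := by
        have := neg_abs_le (‖∑ i, s i • a i‖ - ‖∑ i, s i • b i‖)
        have := hkey s
        linarith
      show ‖y‖ ≤ ‖(0:A) - ∑ i, s i • a i‖ + ‖y + ∑ i, s i • b i‖ + r * ∑ i, |s i|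
      rw [zero_sub, norm_neg]
      linarith
  have part2 : ∀ (c : ℝ) (p : A × B), N (c • p) = |c| * N p := by
    intro c p
    rcases eq_or_ne c 0 with rfl | hc
    · simp only [zero_smul, abs_zero, zero_mul]
      apply le_antisymm
      · refine (hNle (0 : A × B) 0).trans (le_of_eq ?_)
        show ‖(0:A) - ∑ i, (0:ℝ) • a i‖ + ‖(0:B) + ∑ i, (0:ℝ) • b i‖ + r * ∑ i, |(0:ℝ)| = 0
        simp
      · exact hleN 0 0 fun s => hFnn 0 s
    · have hskey : ∀ s : Fin n → ℝ, F (c • p) s = |c| * F p (c⁻¹ • s) := by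
        intro s
        have e1 : (c • p).1 - ∑ i, s i • a i = c • (p.1 - ∑ i, (c⁻¹ • s) i • a i) := by
          rw [Prod.smul_fst, smul_sub, Finset.smul_sum]
          congr 1
          exact Finset.sum_congr rfl fun i _ => by
            rw [smul_smul, Pi.smul_apply, smul_eq_mul, mul_inv_cancel_left₀ hc]
        have e2 : (c • p).2 + ∑ i, s i • b i = c • (p.2 + ∑ i, (c⁻¹ • s) i • b i) := by
          rw [Prod.smul_snd, smul_add, Finset.smul_sum]
          congr 1
          exact Finset.sum_congr rfl fun i _ => by
            rw [smul_smul, Pi.smul_apply, smul_eq_mul, mul_inv_cancel_left₀ hc]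
        have e3 : r * ∑ i, |s i| = |c| * (r * ∑ i, |(c⁻¹ • s) i|) := by
          simp only [Pi.smul_apply, smul_eq_mul, abs_mul, abs_inv]
          rw [← Finset.mul_sum, ← mul_assoc, ← mul_assoc]
          rw [show |c| * r * |c|⁻¹ = r * (|c| * |c|⁻¹) by ring,
            mul_inv_cancel₀ (abs_ne_zero.2 hc), mul_one]
        show ‖(c • p).1 - ∑ i, s i • a i‖ + ‖(c • p).2 + ∑ i, s i • b i‖
            + r * ∑ i, |s i| = |c| * (‖p.1 - ∑ i, (c⁻¹ • s) i • a i‖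
            + ‖p.2 + ∑ i, (c⁻¹ • s) i • b i‖ + r * ∑ i, |(c⁻¹ • s) i|)
        rw [e1, e2, e3, norm_smul, norm_smul, Real.norm_eq_abs]
        ring
      rw [hN' (c • p), hN' p]
      have hre : (⨅ s, F (c • p) s) = ⨅ s : Fin n → ℝ, |c| * F p (c⁻¹ • s) :=
        iInf_congr hskey
      have hsurj : Function.Surjective (fun s : Fin n → ℝ => c⁻¹ • s) := fun t =>
        ⟨c • t, by show c⁻¹ • c • t = t; rw [smul_smul, inv_mul_cancel₀ hc, one_smul]⟩
      have hre2 : (⨅ s : Fin n → ℝ, |c| * F p (c⁻¹ • s)) = ⨅ t, |c| * F p t := by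
        rw [iInf, iInf]
        congr 1
        exact hsurj.range_comp fun t => |c| * F p t
      rw [hre, hre2, ← Real.mul_iInf_of_nonneg (abs_nonneg c)]
  have part5 : ∀ i, N (a i, -b i) ≤ r := by
    intro i
    refine (hNle (a i, -b i) ((Pi.single i 1 : Fin n → ℝ))).trans (le_of_eq ?_)
    have h1 : ∑ j, (Pi.single i 1 : Fin n → ℝ) j • a j = a i := by
      rw [Finset.sum_eq_single i]
      · simp
      · intro j _ hj
        simp [Pi.single_apply, hj]
      · intro h
        exact absurd (Finset.mem_univ i) h
    have h2 : ∑ j, (Pi.single i 1 : Fin n → ℝ) j • b j = b i := by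
      rw [Finset.sum_eq_single i]
      · simp
      · intro j _ hj
        simp [Pi.single_apply, hj]
      · intro h
        exact absurd (Finset.mem_univ i) h
    have h3 : ∑ j, |(Pi.single i 1 : Fin n → ℝ) j| = 1 := by
      rw [Finset.sum_eq_single i]
      · simp
      · intro j _ hj
        simp [Pi.single_apply, hj]
      · intro h
        exact absurd (Finset.mem_univ i) h
    show ‖a i - ∑ j, (Pi.single i 1 : Fin n → ℝ) j • a j‖ + ‖-b i + ∑ j, (Pi.single i 1 : Fin n → ℝ) j • b j‖
        + r * ∑ j, |(Pi.single i 1 : Fin n → ℝ) j| = r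
    rw [h1, h2, h3]
    simp
  exact ⟨part1, part2, part3, part4, part5⟩
end

section
/- Any two Gurarij spaces are isometrically isomorphic (uniqueness of the Gurarij space). -/
/-!
Let `f` be an `ε`-isometry from a finite dimensional subspace `X ≤ G` into `H`. The ℓ¹-amalgam of a
finite dimensional space containing `X` and of the range of `f`, glued along `f`, identifies `x`
with `f x` up to `ε ‖x‖`, and the Gurarij property embeds it almost isometrically into the target.
Doing this in `G` for `f⁻¹` and then in `H` for the map just obtained gives the back-and-forth step:
an almost isometry with arbitrarily small error, `O(ε)`-close to `f` on `X`, whose domain contains a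
prescribed vector of `G` and whose range nearly contains a prescribed vector of `H`. Iterated along
dense sequences of `G` and `H` with summable errors, the step yields a Cauchy chain of almost
isometries. Its limit is a linear isometry `G → H` with dense range, onto since `G` is complete.
-/

open Filter Topology

/-- A Banach space `G` has the Gurarij property if for every `ε > 0`, every
finite dimensional Banach space `F`, subspace `E ⊆ F` and isometric linear
embedding `ψ : E → G`, there is an injective linear map `φ : F → G` extending
`ψ` with `(1−ε)‖x‖ < ‖φx‖ < (1+ε)‖x‖` for all nonzero `x ∈ F`. -/
def IsGurarij (G : Type*) [NormedAddCommGroup G] [NormedSpace ℝ G] : Prop :=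
  ∀ ε : ℝ, 0 < ε →
    ∀ (F : Type) (_ : NormedAddCommGroup F) (_ : NormedSpace ℝ F)
      (_ : FiniteDimensional ℝ F) (E : Submodule ℝ F) (ψ : E →ₗᵢ[ℝ] G),
      ∃ φ : F →ₗ[ℝ] G, Function.Injective φ ∧ (∀ e : E, φ e = ψ e) ∧
        ∀ x : F, x ≠ 0 → (1 - ε) * ‖x‖ < ‖φ x‖ ∧ ‖φ x‖ < (1 + ε) * ‖x‖

def IsAlmostIsometry {E F : Type*} [SeminormedAddCommGroup E] [SeminormedAddCommGroup F]
    (ε : ℝ) (f : E → F) : Prop :=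
  ∀ x, |‖f x‖ - ‖x‖| ≤ ε * ‖x‖

namespace IsAlmostIsometry

section Seminormed

variable {E F : Type*} [SeminormedAddCommGroup E] [SeminormedAddCommGroup F] {ε : ℝ} {f : E → F}

theorem le_norm (hf : IsAlmostIsometry ε f) (x : E) : (1 - ε) * ‖x‖ ≤ ‖f x‖ := by
  linarith [(abs_le.1 (hf x)).1]

theorem norm_le (hf : IsAlmostIsometry ε f) (x : E) : ‖f x‖ ≤ (1 + ε) * ‖x‖ := by
  linarith [(abs_le.1 (hf x)).2]

theorem comp_isometry {D : Type*} [SeminormedAddCommGroup D] (hf : IsAlmostIsometry ε f)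
    {g : D → E} (hg : ∀ x, ‖g x‖ = ‖x‖) : IsAlmostIsometry ε (f ∘ g) := fun x => by
  simpa only [Function.comp_apply, hg] using hf (g x)

theorem isometry_comp {K : Type*} [SeminormedAddCommGroup K] (hf : IsAlmostIsometry ε f)
    {g : F → K} (hg : ∀ y, ‖g y‖ = ‖y‖) : IsAlmostIsometry ε (g ∘ f) := fun x => by
  simpa only [Function.comp_apply, hg] using hf x

end Seminormed

variable {E F : Type*} [NormedAddCommGroup E] [NormedSpace ℝ E] [NormedAddCommGroup F]
  [NormedSpace ℝ F] {ε : ℝ}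

theorem injective {f : E →ₗ[ℝ] F} (hf : IsAlmostIsometry ε f) (hε : ε < 1) :
    Function.Injective f := by
  refine (injective_iff_map_eq_zero f).2 fun x hx => norm_le_zero_iff.1 ?_
  have := hf.le_norm x
  rw [hx, norm_zero] at this
  nlinarith [norm_nonneg x]

theorem symm {e : E ≃ₗ[ℝ] F} (he : IsAlmostIsometry ε e) (hε₀ : 0 ≤ ε) (hε : ε ≤ 1 / 2) :
    IsAlmostIsometry (2 * ε) e.symm := fun y => by
  have h := he (e.symm y)
  rw [e.apply_symm_apply, abs_sub_comm] at h
  have hle : ‖e.symm y‖ ≤ 2 * ‖y‖ := by nlinarith [abs_le.1 h, norm_nonneg (e.symm y)]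
  calc |‖e.symm y‖ - ‖y‖| ≤ ε * ‖e.symm y‖ := h
    _ ≤ ε * (2 * ‖y‖) := by gcongr
    _ = 2 * ε * ‖y‖ := by ring

end IsAlmostIsometry

namespace Amalgamation

open WithLp

variable {X V W : Type*} [NormedAddCommGroup X] [NormedSpace ℝ X]
  [NormedAddCommGroup V] [NormedSpace ℝ V] [NormedAddCommGroup W] [NormedSpace ℝ W]

/- The amalgam `Space ι f ε` of `V` and `W` over `X` is the ℓ¹-sum `V ⊕ W ⊕ V` modulo
`{(ι x, -f x, -ε • ι x)}`. The class of `(v, w, 0)` has norm `⨅ x, ‖v + ι x‖ + ‖w - f x‖ + ε ‖x‖`,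
so `V` and `W` embed isometrically as soon as `f` is an `ε`-isometry, while `ι x` and `f x`
become `ε ‖x‖`-close. -/

variable (V W) in
abbrev L1Sum : Type _ := WithLp 1 (V × WithLp 1 (W × V))

variable (V W) in
def toL1Sum : V × W × V →ₗ[ℝ] L1Sum V W where
  toFun p := toLp 1 (p.1, toLp 1 p.2)
  map_add' _ _ := rfl
  map_smul' _ _ := rfl

theorem norm_toL1Sum (p : V × W × V) : ‖toL1Sum V W p‖ = ‖p.1‖ + ‖p.2.1‖ + ‖p.2.2‖ := by
  rw [add_assoc, prod_norm_eq_of_L1, prod_norm_eq_of_L1]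
  rfl

def relation (ι : X →ₗᵢ[ℝ] V) (f : X →ₗ[ℝ] W) (ε : ℝ) : Submodule ℝ (L1Sum V W) :=
  LinearMap.range (toL1Sum V W ∘ₗ ι.toLinearMap.prod ((-f).prod (-(ε • ι.toLinearMap))))

variable (ι : X →ₗᵢ[ℝ] V) (f : X →ₗ[ℝ] W) (ε : ℝ)

theorem le_norm_mk {c : ℝ} (p : V × W × V)
    (h : ∀ x, c ≤ ‖p.1 + ι x‖ + ‖p.2.1 - f x‖ + ‖p.2.2 - ε • ι x‖) :
    c ≤ ‖(relation ι f ε).mkQ (toL1Sum V W p)‖ := by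
  refine QuotientAddGroup.le_norm_iff.2 fun m hm => ?_
  obtain ⟨x, hx⟩ : m - toL1Sum V W p ∈ relation ι f ε := (Submodule.Quotient.eq _).1 hm
  rw [← sub_add_cancel m (toL1Sum V W p), ← hx, LinearMap.comp_apply, ← map_add, norm_toL1Sum]
  simpa [sub_eq_add_neg, add_comm] using h x

variable [FiniteDimensional ℝ V] [FiniteDimensional ℝ W]

instance : IsClosed (relation ι f ε : Set (L1Sum V W)) :=
  Submodule.closed_of_finiteDimensional _

abbrev Space : Type _ := L1Sum V W ⧸ relation ι f ε

def inl : V →ₗ[ℝ] Space ι f ε :=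
  (relation ι f ε).mkQ ∘ₗ toL1Sum V W ∘ₗ LinearMap.inl ℝ V (W × V)

def inr : W →ₗ[ℝ] Space ι f ε :=
  (relation ι f ε).mkQ ∘ₗ toL1Sum V W ∘ₗ LinearMap.inr ℝ V (W × V) ∘ₗ LinearMap.inl ℝ W V

variable {ι f ε}

theorem norm_inl (hε : 0 ≤ ε) (hf : ∀ x, (1 - ε) * ‖x‖ ≤ ‖f x‖) (v : V) :
    ‖inl ι f ε v‖ = ‖v‖ := by
  refine le_antisymm ((Submodule.Quotient.norm_mk_le _ _).trans_eq (by simp [norm_toL1Sum])) ?_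
  refine le_norm_mk ι f ε (v, 0, 0) fun x => ?_
  rw [zero_sub, zero_sub, norm_neg, norm_neg, norm_smul, ι.norm_map, Real.norm_of_nonneg hε]
  linarith [norm_le_add_norm_add v (ι x), ι.norm_map x, hf x]

theorem norm_inr (hε : 0 ≤ ε) (hf : ∀ x, ‖f x‖ ≤ (1 + ε) * ‖x‖) (w : W) :
    ‖inr ι f ε w‖ = ‖w‖ := by
  refine le_antisymm ((Submodule.Quotient.norm_mk_le _ _).trans_eq (by simp [norm_toL1Sum])) ?_
  refine le_norm_mk ι f ε (0, w, 0) fun x => ?_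
  rw [zero_add, zero_sub, norm_neg, norm_smul, ι.norm_map, Real.norm_of_nonneg hε]
  linarith [norm_le_insert' w (f x), ι.norm_map x, hf x]

theorem norm_inl_sub_inr_le (hε : 0 ≤ ε) (x : X) :
    ‖inl ι f ε (ι x) - inr ι f ε (f x)‖ ≤ ε * ‖x‖ := by
  have h : inl ι f ε (ι x) - inr ι f ε (f x) =
      (relation ι f ε).mkQ (toL1Sum V W (0, 0, ε • ι x)) := by
    refine (Submodule.Quotient.eq _).2 ⟨x, ?_⟩
    simp only [LinearMap.comp_apply, LinearMap.inl_apply, LinearMap.inr_apply, ← map_sub]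
    simp [sub_eq_add_neg]
  rw [h]
  refine (Submodule.Quotient.norm_mk_le _ _).trans_eq ?_
  simp [norm_toL1Sum, norm_smul, abs_of_nonneg hε]

end Amalgamation

theorem LinearIsometry.exists_extension_of_dense {G H : Type*} [NormedAddCommGroup G]
    [NormedSpace ℝ G] [NormedAddCommGroup H] [NormedSpace ℝ H] [CompleteSpace H]
    {D : Submodule ℝ G} (T : D →ₗᵢ[ℝ] H) (hD : Dense (D : Set G)) :
    ∃ T' : G →ₗᵢ[ℝ] H, ∀ x : D, T' x = T x := by
  have hdr : DenseRange D.subtypeL := by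
    rwa [DenseRange, Submodule.coe_subtypeL, Submodule.coe_subtype, Subtype.range_coe]
  have hT' := ContinuousLinearMap.extend_eq T.toContinuousLinearMap hdr
    isometry_subtype_coe.isUniformInducing
  set T' := T.toContinuousLinearMap.extend D.subtypeL
  refine ⟨⟨T'.toLinearMap, fun v => ?_⟩, hT'⟩
  refine hD.induction (P := fun v => ‖T' v‖ = ‖v‖) (fun v hv => ?_)
    (isClosed_eq T'.continuous.norm continuous_norm) v
  simpa using congrArg norm (hT' ⟨v, hv⟩)

theorem Isometry.surjective_of_denseRange {α β : Type*} [MetricSpace α] [CompleteSpace α]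
    [MetricSpace β] {f : α → β} (hf : Isometry f) (hd : DenseRange f) : Function.Surjective f :=
  Set.range_eq_univ.1 (by rw [← hf.isClosedEmbedding.isClosed_range.closure_eq, hd.closure_range])

theorem denseRange_of_approx_unpair {E F : Type*} [SeminormedAddCommGroup E]
    [SeminormedAddCommGroup F] {T : E → F} {y : ℕ → F} (hy : DenseRange y) {ρ : ℕ → ℝ}
    (hρ : Tendsto ρ atTop (𝓝 0)) (h : ∀ n, ∃ x, ‖T x - y n.unpair.1‖ ≤ ρ n * ‖y n.unpair.1‖) :
    DenseRange T := by
  have hy' : ∀ m, y m ∈ closure (Set.range T) := fun m => by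
    refine Metric.mem_closure_iff.2 fun η hη => ?_
    have ht : Tendsto (fun k => ρ (Nat.pair m k) * ‖y m‖) atTop (𝓝 0) := by
      simpa using (hρ.comp (tendsto_atTop_mono (Nat.right_le_pair m) tendsto_id)).mul_const ‖y m‖
    obtain ⟨k, hk⟩ := (ht.eventually (gt_mem_nhds hη)).exists
    obtain ⟨x, hx⟩ := h (Nat.pair m k)
    rw [Nat.unpair_pair] at hx
    exact ⟨T x, Set.mem_range_self x, by rw [dist_eq_norm']; exact hx.trans_lt hk⟩
  exact dense_closure.1 (hy.mono (Set.range_subset_iff.2 hy'))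

theorem denseRange_of_approx_chain {G H : Type*} [NormedAddCommGroup G] [NormedSpace ℝ G]
    [NormedAddCommGroup H] {X : ℕ → Submodule ℝ G} {f : ∀ n, X n → H} {T : G → H}
    {t ρ : ℕ → ℝ} (ht : Tendsto t atTop (𝓝 0)) (hρ : Tendsto ρ atTop (𝓝 0))
    (hT : ∀ n (x : X n), ‖T x - f n x‖ ≤ t n * ‖x‖) {y : ℕ → H} (hy : DenseRange y)
    (happrox : ∀ n, ∃ w : X (n + 1),
      ‖w‖ ≤ 2 * ‖y n.unpair.1‖ ∧ ‖f (n + 1) w - y n.unpair.1‖ ≤ ρ n * ‖y n.unpair.1‖) :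
    DenseRange T := by
  refine denseRange_of_approx_unpair hy (ρ := fun n => 2 * |t (n + 1)| + ρ n)
    (by simpa using ((ht.comp (tendsto_add_atTop_nat 1)).abs.const_mul 2).add hρ) fun n => ?_
  obtain ⟨w, hw, hwy⟩ := happrox n
  refine ⟨w, ?_⟩
  calc _ ≤ ‖T w - f (n + 1) w‖ + ‖f (n + 1) w - y n.unpair.1‖ :=
        norm_sub_le_norm_sub_add_norm_sub _ _ _
    _ ≤ |t (n + 1)| * (2 * ‖y n.unpair.1‖) + ρ n * ‖y n.unpair.1‖ :=
        add_le_add ((hT _ w).trans (mul_le_mul (le_abs_self _) hw (norm_nonneg _) (abs_nonneg _)))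
          hwy
    _ = _ := by ring

theorem exists_seq_of_forall_exists_succ {α : Type*} {P : ℕ → α → Prop} {R : ℕ → α → α → Prop}
    {a₀ : α} (h₀ : P 0 a₀) (h : ∀ n a, P n a → ∃ b, P (n + 1) b ∧ R n a b) :
    ∃ s : ℕ → α, ∀ n, P n (s n) ∧ R n (s n) (s (n + 1)) := by
  choose! next hnext using h
  let s : ℕ → α := fun n => Nat.rec a₀ next n
  have hP : ∀ n, P n (s n) := fun n => Nat.rec h₀ (fun n ih => (hnext n _ ih).1) n
  exact ⟨s, fun n => ⟨hP n, (hnext n _ (hP n)).2⟩⟩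

section ChainLimit

variable {G H : Type*} [NormedAddCommGroup G] [NormedSpace ℝ G] [NormedAddCommGroup H]
  [NormedSpace ℝ H] {X : ℕ → Submodule ℝ G} {f : ∀ n, X n →ₗ[ℝ] H} {c : ℕ → ℝ}

variable (X f c) in
structure IsCauchyChain : Prop where
  le_succ : ∀ n, X n ≤ X (n + 1)
  summable : Summable c
  norm_sub_le : ∀ n (x : X n), ‖f (n + 1) (Submodule.inclusion (le_succ n) x) - f n x‖ ≤ c n * ‖x‖

variable (f) in
open Classical in
noncomputable def chainValue (x : G) (p : ℕ) : H :=
  if h : x ∈ X p then f p ⟨x, h⟩ else 0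

theorem chainValue_of_mem {x : G} {p : ℕ} (h : x ∈ X p) : chainValue f x p = f p ⟨x, h⟩ :=
  dif_pos h

variable (f) in
noncomputable def chainLimit (x : G) : H :=
  limUnder atTop (chainValue f x)

namespace IsCauchyChain

theorem mem_of_le (hf : IsCauchyChain X f c) {x : G} {n p : ℕ} (hnp : n ≤ p) (hx : x ∈ X n) :
    x ∈ X p :=
  monotone_nat_of_le_succ hf.le_succ hnp hx

theorem chainValue_add_eventuallyEq (hf : IsCauchyChain X f c) {x y : G} {n m : ℕ}
    (hx : x ∈ X n) (hy : y ∈ X m) :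
    chainValue f (x + y) =ᶠ[atTop] chainValue f x + chainValue f y := by
  filter_upwards [eventually_ge_atTop (max n m)] with p hp
  have hxp := hf.mem_of_le (le_of_max_le_left hp) hx
  have hyp := hf.mem_of_le (le_of_max_le_right hp) hy
  rw [Pi.add_apply, chainValue_of_mem hxp, chainValue_of_mem hyp,
    chainValue_of_mem (add_mem hxp hyp), ← map_add]
  rfl

theorem chainValue_smul_eventuallyEq (hf : IsCauchyChain X f c) (r : ℝ) {x : G} {n : ℕ}
    (hx : x ∈ X n) :
    chainValue f (r • x) =ᶠ[atTop] r • chainValue f x := by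
  filter_upwards [eventually_ge_atTop n] with p hp
  have hxp := hf.mem_of_le hp hx
  rw [Pi.smul_apply, chainValue_of_mem hxp, chainValue_of_mem (Submodule.smul_mem _ r hxp),
    ← map_smul]
  rfl

variable [CompleteSpace H]

theorem exists_tendsto_chainValue (hf : IsCauchyChain X f c) {x : G} {n : ℕ} (hx : x ∈ X n) :
    ∃ y, Tendsto (chainValue f x) atTop (𝓝 y) ∧
      ‖y - f n ⟨x, hx⟩‖ ≤ (∑' k, c (k + n)) * ‖x‖ := by
  set s : ℕ → H := fun k => chainValue f x (k + n)
  have hd : ∀ k, dist (s k) (s k.succ) ≤ c (k + n) * ‖x‖ := fun k => by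
    have hk := hf.mem_of_le (Nat.le_add_left n k) hx
    rw [dist_comm, dist_eq_norm]
    simp only [s, Nat.succ_add, chainValue_of_mem hk, chainValue_of_mem (hf.le_succ _ hk)]
    exact hf.norm_sub_le (k + n) ⟨x, hk⟩
  have hsum : Summable fun k => c (k + n) * ‖x‖ :=
    ((summable_nat_add_iff n).2 hf.summable).mul_right _
  obtain ⟨y, hy⟩ := cauchySeq_tendsto_of_complete (cauchySeq_of_dist_le_of_summable _ hd hsum)
  refine ⟨y, (tendsto_add_atTop_iff_nat n).1 hy, ?_⟩
  have h0 := dist_le_tsum_of_dist_le_of_tendsto _ hd hsum hy 0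
  simp only [s, zero_add, chainValue_of_mem hx, tsum_mul_right] at h0
  rwa [dist_comm, dist_eq_norm] at h0

theorem tendsto_chainLimit (hf : IsCauchyChain X f c) {x : G} {n : ℕ} (hx : x ∈ X n) :
    Tendsto (chainValue f x) atTop (𝓝 (chainLimit f x)) :=
  let ⟨_, hy, _⟩ := hf.exists_tendsto_chainValue hx
  tendsto_nhds_limUnder ⟨_, hy⟩

theorem norm_chainLimit_sub_le (hf : IsCauchyChain X f c) {x : G} {n : ℕ} (hx : x ∈ X n) :
    ‖chainLimit f x - f n ⟨x, hx⟩‖ ≤ (∑' k, c (k + n)) * ‖x‖ := by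
  obtain ⟨y, hy, hle⟩ := hf.exists_tendsto_chainValue hx
  rwa [← tendsto_nhds_unique hy (hf.tendsto_chainLimit hx)]

theorem chainLimit_add (hf : IsCauchyChain X f c) {x y : G} {n m : ℕ} (hx : x ∈ X n)
    (hy : y ∈ X m) :
    chainLimit f (x + y) = chainLimit f x + chainLimit f y :=
  tendsto_nhds_unique (hf.tendsto_chainLimit (add_mem (hf.mem_of_le (le_max_left n m) hx)
    (hf.mem_of_le (le_max_right n m) hy)))
    (((hf.tendsto_chainLimit hx).add (hf.tendsto_chainLimit hy)).congr'
      (hf.chainValue_add_eventuallyEq hx hy).symm)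

theorem chainLimit_smul (hf : IsCauchyChain X f c) (r : ℝ) {x : G} {n : ℕ} (hx : x ∈ X n) :
    chainLimit f (r • x) = r • chainLimit f x :=
  tendsto_nhds_unique (hf.tendsto_chainLimit (Submodule.smul_mem _ r hx))
    (((hf.tendsto_chainLimit hx).const_smul r).congr' (hf.chainValue_smul_eventuallyEq r hx).symm)

theorem norm_chainLimit (hf : IsCauchyChain X f c) {ε : ℕ → ℝ} (hε : Tendsto ε atTop (𝓝 0))
    (hiso : ∀ n, IsAlmostIsometry (ε n) (f n)) {x : G} {n : ℕ} (hx : x ∈ X n) :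
    ‖chainLimit f x‖ = ‖x‖ := by
  have hdev : ∀ᶠ p in atTop, ‖‖chainValue f x p‖ - ‖x‖‖ ≤ ε p * ‖x‖ := by
    filter_upwards [eventually_ge_atTop n] with p hp
    rw [chainValue_of_mem (hf.mem_of_le hp hx)]
    exact hiso p _
  have hlim : Tendsto (fun p => ‖chainValue f x p‖) atTop (𝓝 ‖x‖) :=
    tendsto_iff_norm_sub_tendsto_zero.2 (squeeze_zero' (.of_forall fun _ => norm_nonneg _) hdev
      (by simpa using hε.mul_const ‖x‖))
  exact tendsto_nhds_unique (hf.tendsto_chainLimit hx).norm hlim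

theorem exists_linearIsometry (hf : IsCauchyChain X f c) {ε : ℕ → ℝ}
    (hε : Tendsto ε atTop (𝓝 0)) (hiso : ∀ n, IsAlmostIsometry (ε n) (f n))
    (hdense : Dense (⋃ n, (X n : Set G))) :
    ∃ T : G →ₗᵢ[ℝ] H, ∀ n (x : X n), ‖T x - f n x‖ ≤ (∑' k, c (k + n)) * ‖x‖ := by
  have hmem : ∀ x ∈ ⨆ n, X n, ∃ n, x ∈ X n := fun x hx =>
    (Submodule.mem_iSup_of_chain ⟨X, monotone_nat_of_le_succ hf.le_succ⟩ x).1 hx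
  choose! idx hidx using hmem
  let T₀ : (⨆ n, X n : Submodule ℝ G) →ₗᵢ[ℝ] H :=
    { toFun := fun x => chainLimit f x
      map_add' := fun x y => hf.chainLimit_add (hidx x x.2) (hidx y y.2)
      map_smul' := fun r x => hf.chainLimit_smul r (hidx x x.2)
      norm_map' := fun x => hf.norm_chainLimit hε hiso (hidx x x.2) }
  obtain ⟨T, hT⟩ := T₀.exists_extension_of_dense
    (hdense.mono (Set.iUnion_subset fun n => SetLike.coe_subset_coe.2 (le_iSup X n)))
  refine ⟨T, fun n x => ?_⟩
  rw [hT ⟨x, Submodule.mem_iSup_of_mem n x.2⟩]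
  exact hf.norm_chainLimit_sub_le x.2

end IsCauchyChain

end ChainLimit

namespace IsGurarij

variable {G H : Type} [NormedAddCommGroup G] [NormedSpace ℝ G] [NormedAddCommGroup H]
  [NormedSpace ℝ H] {δ : ℝ}

theorem exists_almostIsometry_extension (hG : IsGurarij G) {F : Type} [NormedAddCommGroup F]
    [NormedSpace ℝ F] [FiniteDimensional ℝ F] {W : Type*} [NormedAddCommGroup W]
    [NormedSpace ℝ W] (j : W →ₗ[ℝ] F) (hj : ∀ w, ‖j w‖ = ‖w‖) (ψ : W →ₗᵢ[ℝ] G) (hδ : 0 < δ) :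
    ∃ φ : F →ₗ[ℝ] G, IsAlmostIsometry δ φ ∧ ∀ w, φ (j w) = ψ w := by
  let jᵢ : W →ₗᵢ[ℝ] F := ⟨j, hj⟩
  obtain ⟨φ, -, hφψ, hφ⟩ := hG δ hδ F _ _ ‹_› _ (ψ.comp jᵢ.equivRange.symm.toLinearIsometry)
  refine ⟨φ, fun x => ?_, fun w => (hφψ (jᵢ.equivRange w)).trans (by simp)⟩
  rcases eq_or_ne x 0 with rfl | hx
  · simp
  · exact abs_sub_le_iff.2 ⟨by linarith [(hφ x hx).2], by linarith [(hφ x hx).1]⟩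

theorem exists_almostIsometry_comp_near (hG : IsGurarij G) {X : Type*} {V : Type}
    [NormedAddCommGroup X] [NormedSpace ℝ X] [NormedAddCommGroup V] [NormedSpace ℝ V]
    [FiniteDimensional ℝ V] (ι : X →ₗᵢ[ℝ] V) (f : X →ₗ[ℝ] G) {ε : ℝ} (hε : 0 ≤ ε)
    (hf : IsAlmostIsometry ε f) (hδ : 0 < δ) :
    ∃ g : V →ₗ[ℝ] G, IsAlmostIsometry δ g ∧ ∀ x, ‖g (ι x) - f x‖ ≤ (1 + δ) * ε * ‖x‖ := by
  have : FiniteDimensional ℝ X := Module.Finite.of_injective ι.toLinearMap ι.injective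
  let f' : X →ₗ[ℝ] LinearMap.range f := f.rangeRestrict
  have hf' : IsAlmostIsometry ε f' := hf
  obtain ⟨φ, hφ, hφf⟩ := hG.exists_almostIsometry_extension (Amalgamation.inr ι f' ε)
    (Amalgamation.norm_inr hε hf'.norm_le) (LinearMap.range f).subtypeₗᵢ hδ
  refine ⟨φ ∘ₗ Amalgamation.inl ι f' ε, hφ.comp_isometry (Amalgamation.norm_inl hε hf'.le_norm),
    fun x => ?_⟩
  calc ‖φ (Amalgamation.inl ι f' ε (ι x)) - f x‖
      = ‖φ (Amalgamation.inl ι f' ε (ι x) - Amalgamation.inr ι f' ε (f' x))‖ := by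
        rw [map_sub, hφf]
        rfl
    _ ≤ (1 + δ) * (ε * ‖x‖) :=
        (hφ.norm_le _).trans (by gcongr; exact Amalgamation.norm_inl_sub_inr_le hε x)
    _ = (1 + δ) * ε * ‖x‖ := by ring

theorem exists_almostIsometry_near_inverse (hG : IsGurarij G) {E : Type} [NormedAddCommGroup E]
    [NormedSpace ℝ E] {X : Submodule ℝ G} {Y : Submodule ℝ E} [FiniteDimensional ℝ Y]
    (f : X →ₗ[ℝ] E) (hfY : ∀ x, f x ∈ Y) {ε : ℝ} (hε₀ : 0 ≤ ε) (hε : ε ≤ 1 / 2)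
    (hf : IsAlmostIsometry ε f) (hδ : 0 < δ) :
    ∃ h : Y →ₗ[ℝ] G, IsAlmostIsometry δ h ∧
      ∀ x : X, ‖h ⟨f x, hfY x⟩ - x‖ ≤ (1 + δ) * (2 * ε) * ‖f x‖ := by
  let e := LinearEquiv.ofInjective f (hf.injective (by linarith))
  have he : IsAlmostIsometry ε e := hf
  have hRY : LinearMap.range f ≤ Y := by rintro _ ⟨x, rfl⟩; exact hfY x
  let ι : LinearMap.range f →ₗᵢ[ℝ] Y := ⟨Submodule.inclusion hRY, fun _ => rfl⟩
  obtain ⟨h, hh, hhe⟩ := hG.exists_almostIsometry_comp_near ι (X.subtype ∘ₗ e.symm.toLinearMap)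
    (by positivity) ((he.symm hε₀ hε).isometry_comp fun _ => rfl) hδ
  refine ⟨h, hh, fun x => ?_⟩
  have hx : (⟨f x, hfY x⟩ : Y) = ι (e x) := rfl
  rw [hx]
  simpa [e] using hhe (e x)

open Submodule in
theorem exists_backAndForth_step (hG : IsGurarij G) (hH : IsGurarij H)
    {X : Submodule ℝ G} [FiniteDimensional ℝ X] (f : X →ₗ[ℝ] H) {ε δ : ℝ} (hε₀ : 0 < ε)
    (hε : ε ≤ 1 / 2) (hf : IsAlmostIsometry ε f) (hδ₀ : 0 < δ) (hδ : δ ≤ 1) (a : G) (b : H) :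
    ∃ (X' : Submodule ℝ G) (hXX' : X ≤ X') (f' : X' →ₗ[ℝ] H), FiniteDimensional ℝ X' ∧
      IsAlmostIsometry δ f' ∧ (∀ x : X, ‖f' (inclusion hXX' x) - f x‖ ≤ 18 * ε * ‖x‖) ∧
      a ∈ X' ∧ ∃ w : X', ‖w‖ ≤ 2 * ‖b‖ ∧ ‖f' w - b‖ ≤ 6 * ε * ‖b‖ := by
  -- `h ≈ f⁻¹` on `range f` and `f' ≈ h⁻¹` on `range h`, so `f' x ≈ f' (h (f x)) ≈ f x`
  -- and `f' (h b) ≈ b`.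
  set Y := LinearMap.range f ⊔ span ℝ {b}
  have hfY : ∀ x, f x ∈ Y := fun x => mem_sup_left (LinearMap.mem_range_self f x)
  obtain ⟨h, hh, hhf⟩ := hG.exists_almostIsometry_near_inverse f hfY hε₀.le hε hf hε₀
  set X' := X ⊔ LinearMap.range h ⊔ span ℝ {a}
  have hXX' : X ≤ X' := le_sup_left.trans le_sup_left
  have hhX' : ∀ y, h y ∈ X' := fun y => mem_sup_left (mem_sup_right (LinearMap.mem_range_self h y))
  obtain ⟨f', hf', hf'h⟩ := hH.exists_almostIsometry_near_inverse h hhX' hε₀.le hε hh hδ₀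
  set yb : Y := ⟨b, mem_sup_right (mem_span_singleton_self b)⟩
  have hyb : ‖h yb‖ ≤ (1 + 1 / 2) * ‖b‖ := (hh.norm_le yb).trans (by gcongr; exact le_rfl)
  refine ⟨X', hXX', f', inferInstance, hf', fun x => ?_, mem_sup_right (mem_span_singleton_self a),
    ⟨h yb, hhX' yb⟩, by change ‖h yb‖ ≤ _; linarith [norm_nonneg b], ?_⟩
  · set y : Y := ⟨f x, hfY x⟩
    have hx : ‖f' (inclusion hXX' x - ⟨h y, hhX' y⟩)‖ ≤ (1 + δ) * ((1 + ε) * (2 * ε) * ‖f x‖) :=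
      (hf'.norm_le _).trans (by gcongr; rw [norm_sub_rev]; exact hhf x)
    have hsplit : f' (inclusion hXX' x) - f x =
        f' (inclusion hXX' x - ⟨h y, hhX' y⟩) + (f' ⟨h y, hhX' y⟩ - y) := by
      rw [map_sub]; abel
    rw [hsplit]
    calc _ ≤ _ := norm_add_le _ _
      _ ≤ (1 + δ) * ((1 + ε) * (2 * ε) * ‖f x‖) + (1 + δ) * (2 * ε) * ((1 + ε) * ‖f x‖) :=
          add_le_add hx ((hf'h y).trans (by gcongr; exact hh.norm_le y))
      _ = 4 * ((1 + δ) * (1 + ε)) * ε * ‖f x‖ := by ring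
      _ ≤ 4 * (2 * (3 / 2)) * ε * ((1 + 1 / 2) * ‖x‖) := by
          gcongr
          · linarith
          · linarith
          · exact (hf.norm_le x).trans (by gcongr)
      _ = 18 * ε * ‖x‖ := by ring
  · calc _ ≤ (1 + δ) * (2 * ε) * ‖h yb‖ := hf'h yb
      _ ≤ 2 * (2 * ε) * ((1 + 1 / 2) * ‖b‖) := by gcongr; linarith
      _ = 6 * ε * ‖b‖ := by ring

open Submodule in
theorem exists_backAndForth_chain (hG : IsGurarij G) (hH : IsGurarij H)
    {ε : ℕ → ℝ} (hε₀ : ∀ n, 0 < ε n) (hε : ∀ n, ε n ≤ 1 / 2) (hεs : Summable ε)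
    (a : ℕ → G) (b : ℕ → H) :
    ∃ (X : ℕ → Submodule ℝ G) (f : ∀ n, X n →ₗ[ℝ] H),
      IsCauchyChain X f (fun n => 18 * ε n) ∧ (∀ n, IsAlmostIsometry (ε n) (f n)) ∧
      (∀ n, a n ∈ X (n + 1)) ∧
      ∀ n, ∃ w : X (n + 1), ‖w‖ ≤ 2 * ‖b n‖ ∧ ‖f (n + 1) w - b n‖ ≤ 6 * ε n * ‖b n‖ := by
  obtain ⟨s, hs⟩ := exists_seq_of_forall_exists_succ
    (P := fun n (s : Σ X : Submodule ℝ G, X →ₗ[ℝ] H) =>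
      FiniteDimensional ℝ s.1 ∧ IsAlmostIsometry (ε n) s.2)
    (R := fun n s s' => ∃ hle : s.1 ≤ s'.1,
      (∀ x, ‖s'.2 (inclusion hle x) - s.2 x‖ ≤ 18 * ε n * ‖x‖) ∧ a n ∈ s'.1 ∧
      ∃ w, ‖w‖ ≤ 2 * ‖b n‖ ∧ ‖s'.2 w - b n‖ ≤ 6 * ε n * ‖b n‖)
    (a₀ := ⟨⊥, 0⟩) ⟨inferInstance, fun x => by simp [(mem_bot ℝ).1 x.2]⟩
    fun n s ⟨hfd, hs⟩ => by
      have := hfd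
      obtain ⟨X', hle, f', hfd', hf', hclose, ha, hb⟩ := hG.exists_backAndForth_step hH s.2
        (hε₀ n) (hε n) hs (hε₀ (n + 1)) ((hε (n + 1)).trans (by norm_num)) (a n) (b n)
      exact ⟨⟨X', f'⟩, ⟨hfd', hf'⟩, hle, hclose, ha, hb⟩
  choose hle hclose ha hb using fun n => (hs n).2
  exact ⟨fun n => (s n).1, fun n => (s n).2, ⟨hle, hεs.mul_left 18, hclose⟩,
    fun n => (hs n).1.2, ha, hb⟩

end IsGurarij

/-- Uniqueness of the Gurarij space: any two separable Banach spaces with the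
Gurarij property are isometrically isomorphic. -/
theorem gurarij_unique {G H : Type} [NormedAddCommGroup G] [NormedSpace ℝ G]
    [CompleteSpace G] [TopologicalSpace.SeparableSpace G]
    [NormedAddCommGroup H] [NormedSpace ℝ H] [CompleteSpace H]
    [TopologicalSpace.SeparableSpace H]
    (hG : IsGurarij G) (hH : IsGurarij H) :
    Nonempty (G ≃ₗᵢ[ℝ] H) := by
  obtain ⟨a, ha⟩ := TopologicalSpace.exists_dense_seq G
  obtain ⟨b, hb⟩ := TopologicalSpace.exists_dense_seq H
  set ε : ℕ → ℝ := fun n => (1 / 2) ^ (n + 1)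
  have hεs : Summable ε := (summable_nat_add_iff 1).2 summable_geometric_two
  -- `b m` is targeted at every step `Nat.pair m k`, hence with errors tending to `0`.
  obtain ⟨X, f, hf, hiso, haX, hbX⟩ := hG.exists_backAndForth_chain hH (fun n => by positivity)
    (fun n => pow_le_of_le_one (by norm_num) (by norm_num) n.succ_ne_zero) hεs a
    (fun n => b n.unpair.1)
  obtain ⟨T, hT⟩ := hf.exists_linearIsometry hεs.tendsto_atTop_zero hiso
    (ha.mono (Set.range_subset_iff.2 fun n => Set.mem_iUnion.2 ⟨n + 1, haX n⟩))
  have hTdense : DenseRange T := denseRange_of_approx_chain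
    (tendsto_sum_nat_add fun n => 18 * ε n) (ρ := fun n => 6 * ε n)
    (by simpa using hεs.tendsto_atTop_zero.const_mul 6) hT hb hbX
  exact ⟨.ofSurjective T (T.isometry.surjective_of_denseRange hTdense)⟩
end
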